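/- arXiv:1909.07964 — 5 statements merged into one kernel-verified Lean document; each statement's English description precedes it below -/
import Mathlib

section
/- Let 𝒫 = {P_1,…,P_k} and 𝒬 = {Q_1,…,Q_k} be two semi-edge-disjoint sets of paths in a graph such that for each i the last edge of P_i equals the first edge of Q_i, and for all i, j, |E(P_i) ∩ E(Q_j)| ≤ 1. Then the set of paths formed by concatenating P_i and Q_i for each i (leaving out the duplicate edge) is semi-edge-disjoint. -/
/-- A multigraph: a type of vertices, a type of edges, an endpoints map,
and no loops. Parallel edges are allowed. -/
structure MG : Type 1 where
  V : Type
  E : Type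
  ends : E → Sym2 V
  noLoop : ∀ e, ¬ (ends e).IsDiag

namespace MG

/-- Two vertices are adjacent if some edge joins them. -/
def Adjv (G : MG) (x y : G.V) : Prop := ∃ e, G.ends e = s(x, y)

/-- Isomorphism of multigraphs. -/
def Iso (G H : MG) : Prop :=
  ∃ (fv : G.V ≃ H.V) (fe : G.E ≃ H.E), ∀ e, H.ends (fe e) = Sym2.map fv (G.ends e)

/-- `H` is (isomorphic to) a subgraph of `G`. -/
def IsSubgraphOf (H G : MG) : Prop :=
  ∃ (fv : H.V ↪ G.V) (fe : H.E ↪ G.E), ∀ e, G.ends (fe e) = Sym2.map fv (H.ends e)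

/-- The multigraph obtained from `G` by deleting the edges `e₁, e₂` and adding a
new edge with endpoints `u, w`. -/
def splitOff (G : MG) (e₁ e₂ : G.E) (u w : G.V) (huw : u ≠ w) : MG where
  V := G.V
  E := {e : G.E // e ≠ e₁ ∧ e ≠ e₂} ⊕ Unit
  ends := fun x => match x with
    | Sum.inl e => G.ends e.1
    | Sum.inr _ => s(u, w)
  noLoop := by
    rintro (e | e)
    · exact G.noLoop e.1
    · simpa [Sym2.mk_isDiag_iff] using huw

/-- `G'` is obtained from `G` by splitting off one pair of adjacent edges. -/
def SplitStep (G G' : MG) : Prop :=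
  ∃ (e₁ e₂ : G.E) (u v w : G.V) (huw : u ≠ w),
    e₁ ≠ e₂ ∧ G.ends e₁ = s(u, v) ∧ G.ends e₂ = s(v, w) ∧
      Iso G' (G.splitOff e₁ e₂ u w huw)

/-- `G` has an `H`-immersion: `H` can be obtained from a subgraph of `G` by
splitting off pairs of adjacent edges and removing isolated vertices. -/
def Immersion (G H : MG) : Prop :=
  ∃ G₀ G₁ : MG, G₀.IsSubgraphOf G ∧ Relation.ReflTransGen SplitStep G₀ G₁ ∧
    ∃ (fv : H.V ↪ G₁.V) (fe : H.E ≃ G₁.E),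
      (∀ e, G₁.ends (fe e) = Sym2.map fv (H.ends e)) ∧
      ∀ v : G₁.V, v ∉ Set.range fv → ∀ e, v ∉ G₁.ends e

/-- A set of vertices induces a connected subgraph. -/
def ConnIn (G : MG) (S : Set G.V) : Prop :=
  ∀ a ∈ S, ∀ b ∈ S, Relation.ReflTransGen (fun x y => x ∈ S ∧ y ∈ S ∧ G.Adjv x y) a b

/-- `G` has an `H`-minor (branch set formulation of contracting edges in a
subgraph of `G`). -/
def Minor (G H : MG) : Prop :=
  ∃ β : H.V → Set G.V,
    (∀ u, (β u).Nonempty) ∧ (∀ u, G.ConnIn (β u)) ∧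
    (Pairwise fun u v => Disjoint (β u) (β v)) ∧
    ∃ η : H.E ↪ G.E, ∀ e u v, H.ends e = s(u, v) →
      ∃ a ∈ β u, ∃ b ∈ β v, G.ends (η e) = s(a, b)

/-- `G` is a connected multigraph. -/
def Connected (G : MG) : Prop :=
  Nonempty G.V ∧ ∀ a b : G.V, Relation.ReflTransGen G.Adjv a b

/-- The degree of `v` is at least `k`. -/
def degGE (G : MG) (v : G.V) (k : ℕ) : Prop :=
  Nonempty (Fin k ↪ {e : G.E // v ∈ G.ends e})

/-- The line graph of a multigraph: a vertex for each edge, two vertices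
adjacent iff the corresponding edges share an endpoint. -/
def lineGraph (G : MG) : SimpleGraph G.E where
  Adj e f := e ≠ f ∧ ∃ v, v ∈ G.ends e ∧ v ∈ G.ends f
  symm := ⟨by rintro e f ⟨h, v, h1, h2⟩; exact ⟨Ne.symm h, v, h2, h1⟩⟩
  loopless := ⟨by rintro e ⟨h, _⟩; exact h rfl⟩

/-- `mG`: each edge of `G` is replaced by `m` parallel copies. -/
def mul (G : MG) (m : ℕ) : MG where
  V := G.V
  E := G.E × Fin m
  ends := fun p => G.ends p.1
  noLoop := fun p => G.noLoop p.1

/-- `G` has a proper edge colouring with `n` colours. -/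
def EdgeColorable (G : MG) (n : ℕ) : Prop :=
  ∃ C : G.E → Fin n, ∀ e f, e ≠ f → (∃ v, v ∈ G.ends e ∧ v ∈ G.ends f) → C e ≠ C f

/-- The chromatic index of `G`. -/
noncomputable def chromIndex (G : MG) : ℕ := sInf {n | G.EdgeColorable n}

/-- A path between edges: a nonempty sequence of distinct edges in which
consecutive edges are adjacent (this corresponds exactly to a path in the
line graph). -/
structure EPath (G : MG) where
  edges : List G.E
  ne : edges ≠ []
  nodup : edges.Nodup
  chain : edges.Chain' fun a b => ∃ v, v ∈ G.ends a ∧ v ∈ G.ends b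

/-- First edge of an edge-path. -/
def EPath.firstE {G : MG} (P : EPath G) : G.E := P.edges.head P.ne

/-- Last edge of an edge-path. -/
def EPath.lastE {G : MG} (P : EPath G) : G.E := P.edges.getLast P.ne

/-- The (unordered) pair of edges `p` occurs consecutively in `P`; that is,
the corresponding 2-edge path is a subpath of `P`. -/
def EPath.Adj2 {G : MG} (P : EPath G) (p : Sym2 G.E) : Prop :=
  ∃ l₁ a b l₂, P.edges = l₁ ++ a :: b :: l₂ ∧ p = s(a, b)

/-- A set of paths is semi-edge-disjoint: every 2-edge path is a subpath of at
most one path of the set. -/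
def SED (G : MG) (S : Set (EPath G)) : Prop :=
  ∀ P ∈ S, ∀ Q ∈ S, ∀ p, P.Adj2 p → Q.Adj2 p → P = Q

/-- `H` contains `t` distinct edges and a path between each pair of them such
that this set of paths is semi-edge-disjoint. -/
def CliqueSED (H : MG) (t : ℕ) : Prop :=
  ∃ (f : Fin t ↪ H.E) (P : (i j : Fin t) → i < j → EPath H),
    (∀ i j h, (P i j h).firstE = f i ∧ (P i j h).lastE = f j) ∧
    H.SED {Q | ∃ i j h, Q = P i j h}

/-- A path in a multigraph, recorded by its vertex sequence (without
repetitions) and edge sequence. -/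
structure VPath (G : MG) where
  verts : List G.V
  edges : List G.E
  hlen : verts.length = edges.length + 1
  nodup : verts.Nodup
  hends : ∀ (i : ℕ) (h : i < edges.length),
    G.ends (edges.get ⟨i, h⟩) =
      s(verts.get ⟨i, by omega⟩, verts.get ⟨i + 1, by omega⟩)

/-- First vertex of a path. -/
def VPath.first {G : MG} (P : VPath G) : G.V :=
  P.verts.head (by have h := P.hlen; intro hnil; rw [hnil] at h; simp at h)

/-- Last vertex of a path. -/
def VPath.last {G : MG} (P : VPath G) : G.V :=
  P.verts.getLast (by have h := P.hlen; intro hnil; rw [hnil] at h; simp at h)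

/-- A cycle in a multigraph: distinct vertices `v 0, …, v (n-1)` and distinct
edges `e 0, …, e (n-1)` with `e i` joining `v i` to `v (i+1 mod n)`. -/
structure Cycle (G : MG) where
  n : ℕ
  hn : 2 ≤ n
  v : Fin n → G.V
  e : Fin n → G.E
  vinj : Function.Injective v
  einj : Function.Injective e
  hends : ∀ i : Fin n,
    G.ends (e i) =
      s(v i, v ⟨(i.1 + 1) % n, Nat.mod_lt _ (Nat.lt_of_le_of_lt (Nat.zero_le _) i.isLt)⟩)

/-- `G` has a topological `H`-minor: branch vertices joined by internally
disjoint paths. -/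
def TopMinor (G H : MG) : Prop :=
  ∃ (fv : H.V ↪ G.V) (P : H.E → VPath G),
    (∀ e, s((P e).first, (P e).last) = Sym2.map fv (H.ends e)) ∧
    (∀ e, ∀ x ∈ (P e).verts.tail.dropLast, x ∉ Set.range fv) ∧
    (∀ e f, e ≠ f → ∀ x, x ∈ (P e).verts → x ∈ (P f).verts → x ∈ Set.range fv) ∧
    (∀ e f, e ≠ f → ∀ x ∈ (P e).edges, x ∉ (P f).edges)

/-- A set of edges spans a connected subgraph. -/
def ConnEdges (G : MG) (S : Set G.E) : Prop :=
  ∀ e ∈ S, ∀ f ∈ S,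
    Relation.ReflTransGen (fun a b => a ∈ S ∧ b ∈ S ∧ ∃ v, v ∈ G.ends a ∧ v ∈ G.ends b) e f

end MG

/-- A simple graph regarded as a multigraph. -/
def SimpleGraph.toMG {V : Type} (G : SimpleGraph V) : MG where
  V := V
  E := G.edgeSet
  ends := fun e => e.1
  noLoop := fun e => G.not_isDiag_of_mem_edgeSet e.2

/-- The complete graph `K_t` as a multigraph. -/
def completeMG (t : ℕ) : MG := (⊤ : SimpleGraph (Fin t)).toMG

/-!
A consecutive pair of edges of the concatenation of `P i` and `Q i` is already consecutive in
`P i` or in `Q i`: the only new pair is the one at the junction, and since the last edge of `P i`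
is the first edge of `Q i`, that pair is the first pair of `Q i`. A pair cannot be consecutive in
some `P i` and also in some `Q j`, as its two distinct edges would both lie in `E(P i) ∩ E(Q j)`.
So semi-edge-disjointness of `𝒫` and of `𝒬` passes to the concatenations.
-/

theorem List.pair_infix_append {α : Type*} {a b : α} {xs ys : List α}
    (h : [a, b] <:+: xs ++ ys) :
    [a, b] <:+: xs ∨ [a, b] <:+: ys ∨ (xs.getLast? = some a ∧ ys.head? = some b) := by
  rcases List.infix_append_iff_ne_nil.mp h with h | h | ⟨l₁, l₂, h₁, h₂, hab, hs, hp⟩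
  · exact .inl h
  · exact .inr (.inl h)
  · obtain ⟨rfl, rfl⟩ : l₁ = [a] ∧ l₂ = [b] := by
      rcases l₁ with _ | ⟨x, _ | ⟨y, t⟩⟩ <;> rcases l₂ with _ | ⟨z, u⟩ <;> simp_all
    exact .inr (.inr ⟨List.singleton_suffix_iff_getLast?_eq_some.mp hs,
      List.singleton_prefix_iff_head?_eq_some.mp hp⟩)

namespace MG.EPath

variable {G : MG}

theorem adj2_iff_infix (P : EPath G) (p : Sym2 G.E) :
    P.Adj2 p ↔ ∃ a b, [a, b] <:+: P.edges ∧ p = s(a, b) := by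
  simp only [Adj2, List.IsInfix, eq_comm (a := P.edges)]
  constructor
  · rintro ⟨l₁, a, b, l₂, he, rfl⟩
    exact ⟨a, b, ⟨l₁, l₂, by simpa using he⟩, rfl⟩
  · rintro ⟨a, b, ⟨l₁, l₂, he⟩, rfl⟩
    exact ⟨l₁, a, b, l₂, by simpa using he, rfl⟩

theorem Adj2.mem {P : EPath G} {p : Sym2 G.E} (h : P.Adj2 p) {e : G.E} (he : e ∈ p) :
    e ∈ P.edges := by
  obtain ⟨l₁, a, b, l₂, hP, rfl⟩ := h
  rcases Sym2.mem_iff.mp he with rfl | rfl <;> simp [hP]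

theorem Adj2.not_isDiag {P : EPath G} {p : Sym2 G.E} (h : P.Adj2 p) : ¬ p.IsDiag := by
  obtain ⟨l₁, a, b, l₂, hP, rfl⟩ := h
  have := P.nodup
  rw [hP, List.nodup_append] at this
  simp_all

theorem Adj2.not_adj2_of_inter_subsingleton {P Q : EPath G} {p : Sym2 G.E}
    (hPQ : ∀ a b, a ∈ P.edges → a ∈ Q.edges → b ∈ P.edges → b ∈ Q.edges → a = b)
    (hP : P.Adj2 p) : ¬ Q.Adj2 p := by
  intro hQ
  induction p using Sym2.ind with
  | _ a b =>
    have ha := Sym2.mem_mk_left a b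
    have hb := Sym2.mem_mk_right a b
    exact hP.not_isDiag <| Sym2.mk_isDiag_iff.mpr <|
      hPQ a b (hP.mem ha) (hQ.mem ha) (hP.mem hb) (hQ.mem hb)

theorem cons_firstE_tail (Q : EPath G) : Q.firstE :: Q.edges.tail = Q.edges :=
  List.cons_head_tail Q.ne

def append (P Q : EPath G) (hlink : P.lastE = Q.firstE)
    (hcommon : ∀ e ∈ P.edges, e ∈ Q.edges → e = Q.firstE) : EPath G where
  edges := P.edges ++ Q.edges.tail
  ne := by simp [P.ne]
  nodup := by
    have hQ := Q.nodup
    rw [← Q.cons_firstE_tail, List.nodup_cons] at hQ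
    refine P.nodup.append hQ.2 fun e heP heQ => hQ.1 ?_
    rwa [← hcommon e heP (List.mem_of_mem_tail heQ)]
  chain := by
    have hP := P.chain
    have hQ := Q.chain
    rw [← List.dropLast_append_getLast P.ne] at hP ⊢
    rw [← Q.cons_firstE_tail, ← List.singleton_append] at hQ
    rw [lastE] at hlink
    rw [hlink] at hP ⊢
    exact hP.append_overlap hQ (List.cons_ne_nil _ _)

theorem Adj2.of_append {P Q : EPath G} {hlink : P.lastE = Q.firstE}
    {hcommon : ∀ e ∈ P.edges, e ∈ Q.edges → e = Q.firstE} {p : Sym2 G.E}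
    (h : (P.append Q hlink hcommon).Adj2 p) : P.Adj2 p ∨ Q.Adj2 p := by
  simp only [adj2_iff_infix] at h ⊢
  obtain ⟨a, b, hab, rfl⟩ := h
  rcases List.pair_infix_append hab with hP | hQ | ⟨ha, hb⟩
  · exact .inl ⟨a, b, hP, rfl⟩
  · exact .inr ⟨a, b, hQ.trans (List.tail_suffix _).isInfix, rfl⟩
  · refine .inr ⟨a, b, List.IsPrefix.isInfix ?_, rfl⟩
    rw [List.getLast?_eq_some_getLast P.ne, Option.some_inj] at ha
    rw [← Q.cons_firstE_tail, ← hlink, lastE, ha, List.cons_prefix_cons]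
    exact ⟨rfl, List.singleton_prefix_iff_head?_eq_some.mpr hb⟩

end MG.EPath

/-- concatenating paired paths from two semi-edge-disjoint sets of
paths, where the last edge of `P i` is the first edge of `Q i` and
`|E(P i) ∩ E(Q j)| ≤ 1`, yields a semi-edge-disjoint set of paths. -/
theorem sed_concat (G : MG) (k : ℕ) (P Q : Fin k → MG.EPath G)
    (hPinj : Function.Injective P) (hQinj : Function.Injective Q)
    (hPsed : G.SED (Set.range P)) (hQsed : G.SED (Set.range Q))
    (hlink : ∀ i, (P i).lastE = (Q i).firstE)
    (hint : ∀ i j, ∀ a b, a ∈ (P i).edges → a ∈ (Q j).edges →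
      b ∈ (P i).edges → b ∈ (Q j).edges → a = b) :
    ∃ S : Fin k → MG.EPath G,
      (∀ i, (S i).edges = (P i).edges ++ (Q i).edges.tail) ∧
      G.SED (Set.range S) := by
  have hcommon i : ∀ e ∈ (P i).edges, e ∈ (Q i).edges → e = (Q i).firstE := fun e heP heQ =>
    hint i i e _ heP heQ (hlink i ▸ List.getLast_mem _) (List.head_mem _)
  refine ⟨fun i => (P i).append (Q i) (hlink i) (hcommon i), fun i => rfl, ?_⟩
  rintro _ ⟨i, rfl⟩ _ ⟨j, rfl⟩ p hi hj
  obtain rfl : i = j := by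
    rcases hi.of_append with hPi | hQi <;> rcases hj.of_append with hPj | hQj
    · exact hPinj (hPsed _ ⟨i, rfl⟩ _ ⟨j, rfl⟩ p hPi hPj)
    · exact (hPi.not_adj2_of_inter_subsingleton (hint i j) hQj).elim
    · exact (hPj.not_adj2_of_inter_subsingleton (hint j i) hQi).elim
    · exact hQinj (hQsed _ ⟨i, rfl⟩ _ ⟨j, rfl⟩ p hQi hQj)
  rfl
end

section
/- Let H be a graph such that G = L(H) satisfies the Abu-Khzam–Langston property (χ(G) ≥ t implies G has a K_t-immersion, for all t). Then for any m ≥ 2, L(mH) satisfies the Abu-Khzam–Langston property. -/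
/-- A graph satisfies the Abu-Khzam--Langston property if `χ(G) ≥ t` implies
that `G` has a `K_t`-immersion, for every `t`. -/
def AKLProp {V : Type} (G : SimpleGraph V) : Prop :=
  ∀ t : ℕ, (t : ℕ∞) ≤ G.chromaticNumber →
    MG.Immersion (SimpleGraph.toMG G) (completeMG t)

/-!
Blow up a `K_s`-immersion in `L(H)` by `m`: every vertex `x` becomes `m` vertices `(x, a)`
spanning a clique, and every edge `xy` the `m²` edges `(x, a)(y, b)`. The blow-up of a subgraph
of `L(H)` is a subgraph of `L(mH)`, and the blow-up of `K_s` contains `K_t` whenever `t ≤ sm`.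
A split-off of `uv, vw` lifts to the `m²` disjoint split-offs of `(u, a)(v, a + c)` and
`(v, a + c)(w, c)`, which create exactly the copies `(u, a)(w, c)` of the new edge `uw`; edges
that are not wanted at the end are deleted at the start instead. Finally `χ(L(mH)) ≤ m·χ(L(H))`,
so `t ≤ χ(L(mH))` allows `s = χ(L(H))` (or `s = t` when `χ(L(H))` is infinite).
-/

theorem Function.Surjective.sym2_map {α β : Type*} {f : α → β} (hf : f.Surjective) :
    (Sym2.map f).Surjective := by
  refine Sym2.ind fun x y => ?_
  obtain ⟨a, rfl⟩ := hf x
  obtain ⟨b, rfl⟩ := hf y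
  exact ⟨s(a, b), rfl⟩

theorem Sym2.exists_eq_of_map_fst {α β : Type*} {q : Sym2 (α × β)} {x y : α}
    (h : q.map Prod.fst = s(x, y)) : ∃ a b, q = s((x, a), (y, b)) := by
  induction q using Sym2.ind with
  | _ p p' =>
    rcases Sym2.eq_iff.mp h with ⟨rfl, rfl⟩ | ⟨rfl, rfl⟩
    exacts [⟨p.2, p'.2, rfl⟩, ⟨p'.2, p.2, Sym2.eq_swap⟩]

theorem Sym2.mk_prodMk_eq_iff {α β : Type*} {x y : α} (hxy : x ≠ y) {a b a' b' : β} :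
    s((x, a), (y, b)) = s((x, a'), (y, b')) ↔ a = a' ∧ b = b' := by
  simp [hxy, hxy.symm]

namespace MG

theorem Iso.refl (G : MG) : Iso G G :=
  ⟨Equiv.refl _, Equiv.refl _, fun e => by simp⟩

theorem Iso.symm {G H : MG} (h : Iso G H) : Iso H G := by
  obtain ⟨fv, fe, h⟩ := h
  refine ⟨fv.symm, fe.symm, fun e => ?_⟩
  obtain ⟨e, rfl⟩ := fe.surjective e
  simp [h, Sym2.map_map]

theorem Iso.trans {G H K : MG} (h₁ : Iso G H) (h₂ : Iso H K) : Iso G K := by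
  obtain ⟨fv, fe, h₁⟩ := h₁
  obtain ⟨gv, ge, h₂⟩ := h₂
  exact ⟨fv.trans gv, fe.trans ge, fun e => by simp [h₁, h₂, Sym2.map_map]⟩

theorem IsSubgraphOf.trans {A B C : MG} (h₁ : A.IsSubgraphOf B) (h₂ : B.IsSubgraphOf C) :
    A.IsSubgraphOf C := by
  obtain ⟨fv, fe, h₁⟩ := h₁
  obtain ⟨gv, ge, h₂⟩ := h₂
  exact ⟨fv.trans gv, fe.trans ge, fun e => by simp [h₁, h₂, Sym2.map_map]⟩

theorem Iso.isSubgraphOf {G H : MG} (h : Iso G H) : G.IsSubgraphOf H := by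
  obtain ⟨fv, fe, h⟩ := h
  exact ⟨fv.toEmbedding, fe.toEmbedding, h⟩

theorem SplitStep.trans_iso {A B C : MG} (h : SplitStep A B) (hBC : Iso C B) : SplitStep A C := by
  obtain ⟨e₁, e₂, u, v, w, huw, hne, h₁, h₂, hB⟩ := h
  exact ⟨e₁, e₂, u, v, w, huw, hne, h₁, h₂, hBC.trans hB⟩

theorem Iso.splitOff {A B : MG} (fv : A.V ≃ B.V) (fe : A.E ≃ B.E)
    (h : ∀ e, B.ends (fe e) = (A.ends e).map fv) (e₁ e₂ : A.E) (u w : A.V) (huw : u ≠ w) :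
    Iso (A.splitOff e₁ e₂ u w huw)
      (B.splitOff (fe e₁) (fe e₂) (fv u) (fv w) (fv.injective.ne huw)) :=
  ⟨fv, (fe.subtypeEquiv fun e => by simp).sumCongr (Equiv.refl Unit), by
    rintro (e | _)
    · exact h e.1
    · rfl⟩

theorem SplitStep.iso_left {A B C : MG} (hBA : Iso B A) (h : SplitStep B C) : SplitStep A C := by
  obtain ⟨fv, fe, hfe⟩ := hBA
  obtain ⟨e₁, e₂, u, v, w, huw, hne, h₁, h₂, hC⟩ := h
  refine ⟨fe e₁, fe e₂, fv u, fv v, fv w, fv.injective.ne huw, fe.injective.ne hne, ?_, ?_,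
    hC.trans (Iso.splitOff fv fe hfe e₁ e₂ u w huw)⟩
  · rw [hfe, h₁]; rfl
  · rw [hfe, h₂]; rfl

def SplitsTo (A B : MG) : Prop :=
  ∃ C, Relation.ReflTransGen SplitStep A C ∧ Iso C B

theorem SplitsTo.of_iso {A B : MG} (h : Iso A B) : A.SplitsTo B :=
  ⟨A, .refl, h⟩

theorem SplitsTo.refl (A : MG) : A.SplitsTo A :=
  .of_iso (Iso.refl A)

theorem SplitStep.splitsTo {A B : MG} (h : SplitStep A B) : A.SplitsTo B :=
  ⟨B, .single h, Iso.refl B⟩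

theorem SplitsTo.iso_left {A B C : MG} (hBA : Iso B A) (h : B.SplitsTo C) : A.SplitsTo C := by
  obtain ⟨D, hBD, hDC⟩ := h
  rcases hBD.cases_head with rfl | ⟨B', hBB', hB'D⟩
  · exact .of_iso (hBA.symm.trans hDC)
  · exact ⟨D, .head (hBB'.iso_left hBA) hB'D, hDC⟩

theorem SplitsTo.trans {A B C : MG} (h₁ : A.SplitsTo B) (h₂ : B.SplitsTo C) : A.SplitsTo C := by
  obtain ⟨D, hAD, hDB⟩ := h₁
  obtain ⟨E, hDE, hEC⟩ := h₂.iso_left hDB.symm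
  exact ⟨E, hAD.trans hDE, hEC⟩

theorem SplitsTo.trans_iso {A B C : MG} (h : A.SplitsTo B) (hBC : Iso B C) : A.SplitsTo C :=
  h.trans (.of_iso hBC)

theorem SplitsTo.exists_reflTransGen {A B G : MG} (h : A.SplitsTo B) (hA : A.IsSubgraphOf G) :
    ∃ A', A'.IsSubgraphOf G ∧ Relation.ReflTransGen SplitStep A' B := by
  obtain ⟨C, hAC, hCB⟩ := h
  rcases hAC.cases_tail with rfl | ⟨D, hAD, hDC⟩
  · exact ⟨B, hCB.symm.isSubgraphOf.trans hA, .refl⟩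
  · exact ⟨A, hA, .tail hAD (hDC.trans_iso hCB.symm)⟩

def edgeRestrict (G : MG) (S : Set G.E) : MG where
  V := G.V
  E := S
  ends e := G.ends e
  noLoop e := G.noLoop e

theorem edgeRestrict_isSubgraphOf (G : MG) (S : Set G.E) : (G.edgeRestrict S).IsSubgraphOf G :=
  ⟨.refl _, .subtype _, fun _ => (congrFun Sym2.map_id' _).symm⟩

theorem Iso.exists_edgeRestrict {A B : MG} (h : Iso A B) (T : Set B.E) :
    ∃ T₀ : Set A.E, Iso (A.edgeRestrict T₀) (B.edgeRestrict T) := by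
  obtain ⟨fv, fe, h⟩ := h
  exact ⟨fe ⁻¹' T, fv, fe.subtypeEquiv fun _ => Iff.rfl, fun e => h e.1⟩

theorem splitOff_exists_edgeRestrict (G : MG) {e₁ e₂ : G.E} {u v w : G.V} (huw : u ≠ w)
    (hne : e₁ ≠ e₂) (h₁ : G.ends e₁ = s(u, v)) (h₂ : G.ends e₂ = s(v, w))
    (T : Set (G.splitOff e₁ e₂ u w huw).E) :
    ∃ T₀ : Set G.E, (G.edgeRestrict T₀).SplitsTo ((G.splitOff e₁ e₂ u w huw).edgeRestrict T) := by
  by_cases hT : Sum.inr () ∈ T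
  -- keep `e₁, e₂` exactly when the new edge is kept, and then split them off
  · let T₀ : Set G.E := {e | e = e₁ ∨ e = e₂ ∨ ∃ h, Sum.inl ⟨e, h⟩ ∈ T}
    refine ⟨T₀, SplitStep.splitsTo ⟨⟨e₁, Or.inl rfl⟩, ⟨e₂, Or.inr (Or.inl rfl)⟩, u, v, w, huw,
      fun h => hne (congrArg Subtype.val h), h₁, h₂, Equiv.refl _, ?_, ?_⟩⟩
    · refine
        { toFun := fun
            | ⟨.inl e, ht⟩ => .inl ⟨⟨e.1, .inr (.inr ⟨e.2, ht⟩)⟩,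
              ⟨fun h => e.2.1 (congrArg Subtype.val h), fun h => e.2.2 (congrArg Subtype.val h)⟩⟩
            | ⟨.inr _, _⟩ => .inr ()
          invFun := fun
            | .inl e => ⟨.inl ⟨e.1.1,
                ⟨fun h => e.2.1 (Subtype.ext h), fun h => e.2.2 (Subtype.ext h)⟩⟩, by
                obtain ⟨⟨e, he⟩, hne⟩ := e
                rcases he with rfl | rfl | ⟨_, he⟩
                exacts [(hne.1 rfl).elim, (hne.2 rfl).elim, he]⟩
            | .inr _ => ⟨.inr (), hT⟩
          left_inv := by rintro ⟨_ | _, _⟩ <;> rfl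
          right_inv := by rintro (_ | _) <;> rfl }
    · rintro ⟨_ | _, _⟩ <;> exact (congrFun Sym2.map_id' _).symm
  · let T₀ : Set G.E := {e | ∃ h, Sum.inl ⟨e, h⟩ ∈ T}
    refine ⟨T₀, SplitsTo.of_iso ⟨Equiv.refl _,
      { toFun := fun e => ⟨.inl ⟨e.1, e.2.1⟩, e.2.2⟩
        invFun := fun
          | ⟨.inl e, ht⟩ => ⟨e.1, e.2, ht⟩
          | ⟨.inr _, ht⟩ => (hT ht).elim
        left_inv := fun _ => rfl
        right_inv := by
          rintro ⟨_ | _, ht⟩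
          exacts [rfl, (hT ht).elim] }, fun _ => (congrFun Sym2.map_id' _).symm⟩⟩

theorem SplitStep.exists_edgeRestrict {A B : MG} (h : SplitStep A B) (T : Set B.E) :
    ∃ T₀ : Set A.E, (A.edgeRestrict T₀).SplitsTo (B.edgeRestrict T) := by
  obtain ⟨e₁, e₂, u, v, w, huw, hne, h₁, h₂, hB⟩ := h
  obtain ⟨T', hT'⟩ := hB.symm.exists_edgeRestrict T
  obtain ⟨T₀, hT₀⟩ := A.splitOff_exists_edgeRestrict huw hne h₁ h₂ T'
  exact ⟨T₀, hT₀.trans_iso hT'⟩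

theorem SplitsTo.exists_edgeRestrict {A B : MG} (h : A.SplitsTo B) (T : Set B.E) :
    ∃ T₀ : Set A.E, (A.edgeRestrict T₀).SplitsTo (B.edgeRestrict T) := by
  obtain ⟨C, hAC, hCB⟩ := h
  obtain ⟨T', hT'⟩ := hCB.exists_edgeRestrict T
  suffices ∃ T₀ : Set A.E, (A.edgeRestrict T₀).SplitsTo (C.edgeRestrict T') from
    this.imp fun _ h => h.trans_iso hT'
  clear hT' hCB
  induction hAC using Relation.ReflTransGen.head_induction_on generalizing T' with
  | refl => exact ⟨T', .refl _⟩
  | head hstep _ ih =>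
    obtain ⟨T₁, hT₁⟩ := ih T'
    obtain ⟨T₀, hT₀⟩ := hstep.exists_edgeRestrict T₁
    exact ⟨T₀, hT₀.trans hT₁⟩

theorem immersion_iff {G H : MG} :
    G.Immersion H ↔ ∃ G₀ X : MG, G₀.IsSubgraphOf G ∧ G₀.SplitsTo X ∧ H.IsSubgraphOf X := by
  constructor
  · rintro ⟨G₀, G₁, h₀, hG₁, fv, fe, hfe, -⟩
    exact ⟨G₀, G₁, h₀, ⟨G₁, hG₁, Iso.refl _⟩, fv, fe.toEmbedding, hfe⟩
  · rintro ⟨G₀, X, h₀, hX, fv, fe, hfe⟩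
    obtain ⟨T₀, hT₀⟩ := hX.exists_edgeRestrict (Set.range fe)
    obtain ⟨G₀', h₀', hG₀'⟩ :=
      hT₀.exists_reflTransGen ((G₀.edgeRestrict_isSubgraphOf T₀).trans h₀)
    refine ⟨G₀', _, h₀', hG₀', fv, Equiv.ofInjective fe fe.injective, hfe, ?_⟩
    rintro (v : X.V) hv ⟨_, e, rfl⟩ (hve : v ∈ X.ends (fe e))
    rw [hfe, Sym2.mem_map] at hve
    obtain ⟨x, -, rfl⟩ := hve
    exact hv ⟨x, rfl⟩

theorem Immersion.mono {G G' H H' : MG} (h : G.Immersion H) (hG : G.IsSubgraphOf G')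
    (hH : H'.IsSubgraphOf H) : G'.Immersion H' := by
  obtain ⟨G₀, X, h₀, hX, hHX⟩ := immersion_iff.mp h
  exact immersion_iff.mpr ⟨G₀, X, h₀.trans hG, hX, hH.trans hHX⟩

/-- The blow-up of `G` by `m`: each vertex `x` becomes a clique on the vertices `(x, a)`, and
each edge `e` becomes the `m²` edges `(e, q)` with `q` lying over `G.ends e`. -/
def blowup (G : MG) (m : ℕ) : MG where
  V := G.V × Fin m
  E := {p : G.E × Sym2 (G.V × Fin m) // p.2.map Prod.fst = G.ends p.1} ⊕
    G.V × {q : Sym2 (Fin m) // ¬q.IsDiag}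
  ends := Sum.elim (fun p => p.1.2) fun x => x.2.1.map (Prod.mk x.1)
  noLoop := by
    rintro (⟨⟨e, q⟩, hq⟩ | ⟨x, q, hq⟩) h
    · exact G.noLoop e (hq ▸ h.map)
    · exact hq ((Sym2.isDiag_map (Prod.mk_right_injective x)).mp h)

section BlowupMap

variable {A B : MG} {fv : A.V → B.V} {fe : A.E → B.E}
  (h : ∀ e, B.ends (fe e) = (A.ends e).map fv) (m : ℕ)

def blowupMap : (A.blowup m).E → (B.blowup m).E :=
  Sum.map (fun p => ⟨(fe p.1.1, p.1.2.map (Prod.map fv id)), by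
    rw [Sym2.map_map, h, ← p.2, Sym2.map_map]; rfl⟩) (Prod.map fv id)

theorem blowupMap_ends (x : (A.blowup m).E) :
    (B.blowup m).ends (blowupMap h m x) = ((A.blowup m).ends x).map (Prod.map fv id) := by
  rcases x with p | x
  · rfl
  · exact (Sym2.map_map (g := Prod.map fv id) (f := Prod.mk x.1) _).symm

theorem blowupMap_injective (hv : fv.Injective) (he : fe.Injective) :
    (blowupMap h m).Injective := by
  refine Function.Injective.sumMap (fun p p' hpp' => ?_) (hv.prodMap fun _ _ => id)
  simp only [Subtype.mk.injEq, Prod.mk.injEq] at hpp'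
  exact Subtype.ext (Prod.ext (he hpp'.1) (Sym2.map.injective (hv.prodMap fun _ _ => id) hpp'.2))

theorem blowupMap_surjective (hv : fv.Bijective) (he : fe.Surjective) :
    (blowupMap h m).Surjective := by
  rintro (⟨⟨f, q'⟩, hq'⟩ | ⟨y, q⟩)
  · obtain ⟨e, rfl⟩ := he f
    obtain ⟨q, rfl⟩ := (hv.2.prodMap Function.surjective_id).sym2_map q'
    refine ⟨.inl ⟨(e, q), Sym2.map.injective hv.1 ?_⟩, rfl⟩
    rw [← h, ← hq', Sym2.map_map, Sym2.map_map]
    rfl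
  · obtain ⟨x, rfl⟩ := hv.2 y
    exact ⟨.inr (x, q), rfl⟩

end BlowupMap

theorem IsSubgraphOf.blowup {A B : MG} (h : A.IsSubgraphOf B) (m : ℕ) :
    (A.blowup m).IsSubgraphOf (B.blowup m) := by
  obtain ⟨fv, fe, h⟩ := h
  exact ⟨⟨Prod.map fv id, fv.injective.prodMap fun _ _ => id⟩,
    ⟨blowupMap h m, blowupMap_injective h m fv.injective fe.injective⟩, blowupMap_ends h m⟩

theorem Iso.blowup {A B : MG} (h : Iso A B) (m : ℕ) : Iso (A.blowup m) (B.blowup m) := by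
  obtain ⟨fv, fe, h⟩ := h
  exact ⟨fv.prodCongr (.refl _), .ofBijective (blowupMap h m)
    ⟨blowupMap_injective h m fv.injective fe.injective,
      blowupMap_surjective h m fv.bijective fe.surjective⟩, blowupMap_ends h m⟩

theorem blowup_ends_injective {G : MG} (hG : G.ends.Injective) (m : ℕ) :
    (G.blowup m).ends.Injective := by
  have hmixed : ∀ e q hq x q',
      (G.blowup m).ends (.inl ⟨(e, q), hq⟩) ≠ (G.blowup m).ends (.inr (x, q')) := by
    rintro e q hq x ⟨q', -⟩ (hqq' : q = q'.map (Prod.mk x))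
    refine G.noLoop e ?_
    induction q' using Sym2.ind
    rw [← hq, hqq']
    exact Sym2.mk_isDiag_iff.mpr rfl
  rintro (⟨⟨e, q⟩, hq⟩ | ⟨x, q, hq⟩) (⟨⟨e', q'⟩, hq'⟩ | ⟨x', q', hq'⟩) hqq'
  · obtain rfl : q = q' := hqq'
    obtain rfl : e = e' := hG (hq.symm.trans hq')
    rfl
  · exact (hmixed _ _ _ _ _ hqq').elim
  · exact (hmixed _ _ _ _ _ hqq'.symm).elim
  · change q.map (Prod.mk x) = q'.map (Prod.mk x') at hqq'
    obtain rfl : x = x' := by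
      induction q using Sym2.ind
      induction q' using Sym2.ind
      simp only [Sym2.map_mk, Sym2.eq_iff, Prod.mk.injEq] at hqq'
      tauto
    obtain rfl := Sym2.map.injective (Prod.mk_right_injective x) hqq'
    rfl

theorem exists_blowup_ends (G : MG) {m : ℕ} {x y : G.V × Fin m} (hxy : x ≠ y)
    (h : x.1 = y.1 ∨ ∃ e, G.ends e = s(x.1, y.1)) : ∃ f, (G.blowup m).ends f = s(x, y) := by
  obtain ⟨x, a⟩ := x
  obtain ⟨y, b⟩ := y
  rcases h with rfl | ⟨e, he⟩
  · exact ⟨.inr (x, ⟨s(a, b), by simpa using hxy⟩), rfl⟩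
  · exact ⟨.inl ⟨(e, s((x, a), (y, b))), he.symm⟩, rfl⟩

theorem isSubgraphOf_of_ends_injective {H X : MG} (fv : H.V ↪ X.V) (hH : H.ends.Injective)
    (h : ∀ e, ∃ f, X.ends f = (H.ends e).map fv) : H.IsSubgraphOf X := by
  choose fe hfe using h
  refine ⟨fv, ⟨fe, fun e e' he => hH (Sym2.map.injective fv.injective ?_)⟩, hfe⟩
  rw [← hfe, ← hfe, he]

theorem blowup_lineGraph_isSubgraphOf (H : MG) (m : ℕ) :
    (H.lineGraph.toMG.blowup m).IsSubgraphOf (H.mul m).lineGraph.toMG := by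
  refine isSubgraphOf_of_ends_injective (.refl (H.E × Fin m))
    (blowup_ends_injective Subtype.val_injective m) fun f =>
      ⟨⟨_, ?_⟩, (congrFun Sym2.map_id' _).symm⟩
  rcases f with ⟨⟨⟨e, he⟩, q⟩, hq⟩ | ⟨x, q, hq⟩
  · induction q using Sym2.ind with
    | _ p p' =>
      obtain rfl : s(p.1, p'.1) = e := hq
      exact ⟨fun h => he.1 (congrArg Prod.fst h), he.2⟩
  · induction q using Sym2.ind with
    | _ a b =>
      exact ⟨fun h => hq (Sym2.mk_isDiag_iff.mpr (congrArg Prod.snd h)), _,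
        Sym2.out_fst_mem _, Sym2.out_fst_mem _⟩

theorem completeMG_isSubgraphOf_blowup {t s m : ℕ} (h : t ≤ s * m) :
    (completeMG t).IsSubgraphOf ((completeMG s).blowup m) := by
  let φ : Fin t ↪ Fin s × Fin m := (Fin.castLEEmb h).trans finProdFinEquiv.symm.toEmbedding
  refine isSubgraphOf_of_ends_injective φ Subtype.val_injective ?_
  rintro ⟨e, he⟩
  induction e using Sym2.ind with
  | _ i j =>
    have hij : i ≠ j := he
    refine exists_blowup_ends _ (φ.injective.ne hij) ?_
    by_cases hφ : (φ i).1 = (φ j).1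
    · exact .inl hφ
    · exact .inr ⟨⟨s((φ i).1, (φ j).1), hφ⟩, rfl⟩

theorem splitStep_of_equiv {G B : MG} {e₁ e₂ : G.E} {u v w : G.V} (hne : e₁ ≠ e₂) (huw : u ≠ w)
    (h₁ : G.ends e₁ = s(u, v)) (h₂ : G.ends e₂ = s(v, w)) (fv : G.V ≃ B.V) (r : B.E)
    (fe : {e // e ≠ e₁ ∧ e ≠ e₂} ≃ {f // f ≠ r}) (hr : B.ends r = s(fv u, fv w))
    (hfe : ∀ e, B.ends (fe e) = (G.ends e.1).map fv) : SplitStep G B := by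
  classical
  refine ⟨e₁, e₂, u, v, w, huw, hne, h₁, h₂, Iso.symm ⟨fv,
    ((Equiv.optionEquivSumPUnit _).symm.trans fe.optionCongr).trans (.optionSubtypeNe r), ?_⟩⟩
  rintro (e | ⟨⟩)
  exacts [hfe e, hr]

section SplitOffFamily

variable {G : MG} {K : Type} (P Q : K → G.E) (U W : K → G.V)

/-- `G` with the pairs `P k, Q k`, `k ∈ S`, split off. Old and new edges both live in `G.E ⊕ K`,
so that adding an index to `S` renames no edge. -/
def splitOffFamily (hUW : ∀ k, U k ≠ W k) (S : Set K) : MG where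
  V := G.V
  E := {x : G.E ⊕ K // Sum.elim (fun e => ∀ k ∈ S, e ≠ P k ∧ e ≠ Q k) (· ∈ S) x}
  ends x := Sum.elim G.ends (fun k => s(U k, W k)) x.1
  noLoop := by
    rintro ⟨e | k, -⟩
    · exact G.noLoop e
    · exact Sym2.mk_isDiag_iff.not.mpr (hUW k)

theorem splitsTo_splitOffFamily_empty (hUW : ∀ k, U k ≠ W k) :
    G.SplitsTo (splitOffFamily P Q U W hUW ∅) :=
  .of_iso ⟨.refl _,
    { toFun e := ⟨.inl e, fun _ hk => hk.elim⟩
      invFun := fun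
        | ⟨.inl e, _⟩ => e
        | ⟨.inr _, hk⟩ => hk.elim
      left_inv _ := rfl
      right_inv := by
        rintro ⟨_ | _, hk⟩
        exacts [rfl, hk.elim] }, fun _ => (congrFun Sym2.map_id' _).symm⟩

theorem splitStep_splitOffFamily_insert (hUW : ∀ k, U k ≠ W k) {V : K → G.V}
    (hP : ∀ k, G.ends (P k) = s(U k, V k)) (hQ : ∀ k, G.ends (Q k) = s(V k, W k))
    (hPQ : (Sum.elim P Q).Injective) {S : Set K} {k : K} (hk : k ∉ S) :
    SplitStep (splitOffFamily P Q U W hUW S) (splitOffFamily P Q U W hUW (insert k S)) := by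
  have hne : ∀ j ∈ S, k ≠ j := fun j hj h => hk (h ▸ hj)
  let e₁ : (splitOffFamily P Q U W hUW S).E := ⟨.inl (P k), fun j hj =>
    ⟨hPQ.ne (Sum.inl_injective.ne (hne j hj)), hPQ.ne Sum.inl_ne_inr⟩⟩
  let e₂ : (splitOffFamily P Q U W hUW S).E := ⟨.inl (Q k), fun j hj =>
    ⟨hPQ.ne Sum.inr_ne_inl, hPQ.ne (Sum.inr_injective.ne (hne j hj))⟩⟩
  let r : (splitOffFamily P Q U W hUW (insert k S)).E := ⟨.inr k, Set.mem_insert k S⟩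
  have fwd : ∀ x : (splitOffFamily P Q U W hUW S).E, x ≠ e₁ ∧ x ≠ e₂ →
      Sum.elim (fun e => ∀ j ∈ insert k S, e ≠ P j ∧ e ≠ Q j) (· ∈ insert k S) x.1 ∧
        x.1 ≠ .inr k := by
    rintro ⟨e | j, hx⟩ ⟨h₁, h₂⟩
    · refine ⟨Set.forall_mem_insert.mpr ⟨⟨fun h => h₁ ?_, fun h => h₂ ?_⟩, hx⟩, Sum.inl_ne_inr⟩
      exacts [Subtype.ext (congrArg Sum.inl h), Subtype.ext (congrArg Sum.inl h)]
    · exact ⟨Set.mem_insert_of_mem k hx, fun h => hk (Sum.inr_injective h ▸ hx)⟩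
  have bwd : ∀ y : (splitOffFamily P Q U W hUW (insert k S)).E, y ≠ r →
      Sum.elim (fun e => ∀ j ∈ S, e ≠ P j ∧ e ≠ Q j) (· ∈ S) y.1 ∧
        y.1 ≠ .inl (P k) ∧ y.1 ≠ .inl (Q k) := by
    rintro ⟨e | j, hy⟩ hr
    · obtain ⟨⟨hPk, hQk⟩, hS⟩ := Set.forall_mem_insert.mp hy
      exact ⟨hS, fun h => hPk (Sum.inl_injective h), fun h => hQk (Sum.inl_injective h)⟩
    · exact ⟨Set.mem_of_mem_insert_of_ne hy fun h => hr (Subtype.ext (congrArg Sum.inr h)),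
        Sum.inr_ne_inl, Sum.inr_ne_inl⟩
  refine splitStep_of_equiv (e₁ := e₁) (e₂ := e₂)
    (fun h => hPQ.ne Sum.inl_ne_inr (Sum.inl_injective (congrArg Subtype.val h))) (hUW k)
    (hP k) (hQ k) (.refl _) r
    { toFun x := ⟨⟨x.1.1, (fwd x.1 x.2).1⟩, fun h => (fwd x.1 x.2).2 (congrArg Subtype.val h)⟩
      invFun y := ⟨⟨y.1.1, (bwd y.1 y.2).1⟩, fun h => (bwd y.1 y.2).2.1 (congrArg Subtype.val h),
        fun h => (bwd y.1 y.2).2.2 (congrArg Subtype.val h)⟩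
      left_inv _ := rfl
      right_inv _ := rfl } rfl fun _ => (congrFun Sym2.map_id' _).symm

theorem splitsTo_of_splitOff_pairs [Finite K] (hUW : ∀ k, U k ≠ W k) {V : K → G.V}
    (hP : ∀ k, G.ends (P k) = s(U k, V k)) (hQ : ∀ k, G.ends (Q k) = s(V k, W k))
    (hPQ : (Sum.elim P Q).Injective) {B : MG} (fv : G.V ≃ B.V)
    (fe : {e // ∀ k, e ≠ P k ∧ e ≠ Q k} ⊕ K ≃ B.E)
    (hold : ∀ e, B.ends (fe (.inl e)) = (G.ends e.1).map fv)
    (hnew : ∀ k, B.ends (fe (.inr k)) = s(fv (U k), fv (W k))) : G.SplitsTo B := by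
  have key : ∀ S : Set K, S.Finite → G.SplitsTo (splitOffFamily P Q U W hUW S) := by
    intro S hS
    induction S, hS using Set.Finite.induction_on with
    | empty => exact splitsTo_splitOffFamily_empty P Q U W hUW
    | insert hk _ ih =>
      exact ih.trans (splitStep_splitOffFamily_insert P Q U W hUW hP hQ hPQ hk).splitsTo
  refine (key Set.univ Set.finite_univ).trans_iso ⟨fv, Equiv.trans
    { toFun := fun
        | ⟨.inl e, he⟩ => .inl ⟨e, fun k => he k trivial⟩
        | ⟨.inr k, _⟩ => .inr k
      invFun := fun
        | .inl e => ⟨.inl e.1, fun k _ => e.2 k⟩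
        | .inr k => ⟨.inr k, trivial⟩
      left_inv := by rintro ⟨_ | _, _⟩ <;> rfl
      right_inv := by rintro (_ | _) <;> rfl } fe, ?_⟩
  rintro ⟨e | k, _⟩
  exacts [hold _, hnew k]

end SplitOffFamily

theorem ne_of_ends_eq {G : MG} {e : G.E} {x y : G.V} (h : G.ends e = s(x, y)) : x ≠ y :=
  fun hxy => G.noLoop e (h ▸ Sym2.mk_isDiag_iff.mpr hxy)

section BlowupSplitOff

variable {G : MG} (m : ℕ) {e₁ e₂ : G.E} {u v w : G.V}

/-- The pair `k = (a, c)` of copies of `e₁` and `e₂` passes through `(v, a + c)`, so that every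
copy of `e₁` and of `e₂` lies in exactly one pair. -/
def blowupPairFst (h₁ : G.ends e₁ = s(u, v)) (k : Fin m × Fin m) : (G.blowup m).E :=
  .inl ⟨(e₁, s((u, k.1), (v, k.1 + k.2))), by rw [h₁]; rfl⟩

def blowupPairSnd (h₂ : G.ends e₂ = s(v, w)) (k : Fin m × Fin m) : (G.blowup m).E :=
  .inl ⟨(e₂, s((v, k.1 + k.2), (w, k.2))), by rw [h₂]; rfl⟩

theorem exists_blowupPairFst_eq [NeZero m] (h₁ : G.ends e₁ = s(u, v)) {q : Sym2 (G.V × Fin m)}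
    (hq : q.map Prod.fst = G.ends e₁) : ∃ k, blowupPairFst m h₁ k = .inl ⟨(e₁, q), hq⟩ := by
  obtain ⟨a, b, rfl⟩ := Sym2.exists_eq_of_map_fst (hq.trans h₁)
  exact ⟨(a, b - a), by simp [blowupPairFst]; rfl⟩

theorem exists_blowupPairSnd_eq [NeZero m] (h₂ : G.ends e₂ = s(v, w)) {q : Sym2 (G.V × Fin m)}
    (hq : q.map Prod.fst = G.ends e₂) : ∃ k, blowupPairSnd m h₂ k = .inl ⟨(e₂, q), hq⟩ := by
  obtain ⟨b, c, rfl⟩ := Sym2.exists_eq_of_map_fst (hq.trans h₂)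
  exact ⟨(b - c, c), by simp [blowupPairSnd]; rfl⟩

theorem injective_sumElim_blowupPair (hne : e₁ ≠ e₂) (h₁ : G.ends e₁ = s(u, v))
    (h₂ : G.ends e₂ = s(v, w)) :
    (Sum.elim (blowupPairFst m h₁) (blowupPairSnd m h₂)).Injective := by
  refine .sumElim (fun k k' h => ?_) (fun k k' h => ?_) fun k k' h => ?_
  · have h := congrArg Prod.snd (Subtype.ext_iff.mp (Sum.inl.inj h))
    simp only [Sym2.mk_prodMk_eq_iff (ne_of_ends_eq h₁)] at h
    exact Prod.ext h.1 (by simpa [h.1] using h.2)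
  · have h := congrArg Prod.snd (Subtype.ext_iff.mp (Sum.inl.inj h))
    simp only [Sym2.mk_prodMk_eq_iff (ne_of_ends_eq h₂)] at h
    exact Prod.ext (by simpa [h.2] using h.1) h.2
  · exact hne (congrArg Prod.fst (Subtype.ext_iff.mp (Sum.inl.inj h)))

def blowupSplitOffEdge [NeZero m] (huw : u ≠ w) (h₁ : G.ends e₁ = s(u, v))
    (h₂ : G.ends e₂ = s(v, w)) :
    {x : (G.blowup m).E // ∀ k, x ≠ blowupPairFst m h₁ k ∧ x ≠ blowupPairSnd m h₂ k} ⊕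
      (Fin m × Fin m) → ((G.splitOff e₁ e₂ u w huw).blowup m).E
  | .inl ⟨.inl ⟨(e, q), hq⟩, hx⟩ => .inl ⟨(.inl ⟨e,
      by rintro rfl; obtain ⟨k, hk⟩ := exists_blowupPairFst_eq m h₁ hq; exact (hx k).1 hk.symm,
      by rintro rfl; obtain ⟨k, hk⟩ := exists_blowupPairSnd_eq m h₂ hq; exact (hx k).2 hk.symm⟩,
      q), hq⟩
  | .inl ⟨.inr c, _⟩ => .inr c
  | .inr k => .inl ⟨(.inr (), s((u, k.1), (w, k.2))), rfl⟩

theorem blowupSplitOffEdge_bijective [NeZero m] (huw : u ≠ w) (h₁ : G.ends e₁ = s(u, v))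
    (h₂ : G.ends e₂ = s(v, w)) : (blowupSplitOffEdge m huw h₁ h₂).Bijective := by
  constructor
  · rintro (⟨⟨⟨e, q⟩, hq⟩ | c, hx⟩ | k) (⟨⟨⟨e', q'⟩, hq'⟩ | c', hx'⟩ | k') h <;>
      first | (cases h; done) | (cases h; rfl) | skip
    have h := congrArg Prod.snd (Subtype.ext_iff.mp (Sum.inl.inj h))
    exact congrArg Sum.inr (Prod.ext_iff.mpr ((Sym2.mk_prodMk_eq_iff huw).mp h))
  · rintro (⟨⟨e | ⟨⟩, q⟩, hq⟩ | c)
    · refine ⟨.inl ⟨.inl ⟨(e.1, q), hq⟩, fun k => ⟨fun h => e.2.1 ?_, fun h => e.2.2 ?_⟩⟩, rfl⟩ <;>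
        exact congrArg Prod.fst (Subtype.ext_iff.mp (Sum.inl.inj h))
    · obtain ⟨a, c, rfl⟩ := Sym2.exists_eq_of_map_fst hq
      exact ⟨.inr (a, c), rfl⟩
    · exact ⟨.inl ⟨.inr c, fun k => ⟨Sum.inr_ne_inl, Sum.inr_ne_inl⟩⟩, rfl⟩

theorem splitsTo_blowup_splitOff [NeZero m] (huw : u ≠ w) (hne : e₁ ≠ e₂) (h₁ : G.ends e₁ = s(u, v))
    (h₂ : G.ends e₂ = s(v, w)) : (G.blowup m).SplitsTo ((G.splitOff e₁ e₂ u w huw).blowup m) :=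
  splitsTo_of_splitOff_pairs (blowupPairFst m h₁) (blowupPairSnd m h₂) (fun k => (u, k.1))
    (fun k => (w, k.2)) (fun _ h => huw (congrArg Prod.fst h)) (V := fun k => (v, k.1 + k.2))
    (fun _ => rfl) (fun _ => rfl) (injective_sumElim_blowupPair m hne h₁ h₂) (.refl _)
    (.ofBijective _ (blowupSplitOffEdge_bijective m huw h₁ h₂))
    (by rintro ⟨⟨_, _⟩ | _, _⟩ <;> exact (congrFun Sym2.map_id' _).symm) fun _ => rfl

end BlowupSplitOff

theorem SplitStep.blowup_splitsTo {A B : MG} (h : SplitStep A B) (m : ℕ) [NeZero m] :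
    (A.blowup m).SplitsTo (B.blowup m) := by
  obtain ⟨e₁, e₂, u, v, w, huw, hne, h₁, h₂, hB⟩ := h
  exact (splitsTo_blowup_splitOff m huw hne h₁ h₂).trans_iso (hB.symm.blowup m)

theorem SplitsTo.blowup {A B : MG} (h : A.SplitsTo B) (m : ℕ) [NeZero m] :
    (A.blowup m).SplitsTo (B.blowup m) := by
  obtain ⟨C, hAC, hCB⟩ := h
  refine SplitsTo.trans_iso ?_ (hCB.blowup m)
  clear hCB
  induction hAC with
  | refl => exact .refl _
  | tail _ hstep ih => exact ih.trans (hstep.blowup_splitsTo m)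

theorem Immersion.blowup {G H : MG} (h : G.Immersion H) (m : ℕ) [NeZero m] :
    (G.blowup m).Immersion (H.blowup m) := by
  obtain ⟨G₀, X, h₀, hX, hH⟩ := immersion_iff.mp h
  exact immersion_iff.mpr ⟨_, _, h₀.blowup m, hX.blowup m, hH.blowup m⟩

theorem colorable_lineGraph_mul {H : MG} {n : ℕ} (h : H.lineGraph.Colorable n) (m : ℕ) :
    (H.mul m).lineGraph.Colorable (n * m) := by
  obtain ⟨c⟩ := h
  let c' : (H.mul m).lineGraph.Coloring (Fin n × Fin m) := .mk (fun p => (c p.1, p.2)) <| by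
    rintro ⟨e, i⟩ ⟨f, j⟩ ⟨hne, hef⟩ h
    obtain rfl | hef' := eq_or_ne e f
    · exact hne (Prod.ext rfl (Prod.ext_iff.mp h).2)
    · exact c.valid ⟨hef', hef⟩ (congrArg Prod.fst h)
  simpa using c'.colorable

theorem chromaticNumber_lineGraph_mul_le (H : MG) (m : ℕ) :
    (H.mul m).lineGraph.chromaticNumber ≤ H.lineGraph.chromaticNumber * m := by
  obtain rfl | hm := eq_or_ne m 0
  · have : IsEmpty (H.mul 0).E := inferInstanceAs (IsEmpty (H.E × Fin 0))
    simp [SimpleGraph.chromaticNumber_eq_zero_of_isEmpty]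
  cases hχ : H.lineGraph.chromaticNumber using ENat.recTopCoe with
  | top => simp [ENat.top_mul (Nat.cast_ne_zero.mpr hm)]
  | coe n =>
    have := (colorable_lineGraph_mul (SimpleGraph.chromaticNumber_le_iff_colorable.mp hχ.le) m)
    exact_mod_cast this.chromaticNumber_le

end MG

/-- if `L(H)` satisfies the Abu-Khzam--Langston property then so
does `L(mH)` for every `m ≥ 2`. -/
theorem AKL_of_mul (H : MG) (hAKL : AKLProp H.lineGraph) (m : ℕ) (hm : 2 ≤ m) :
    AKLProp (H.mul m).lineGraph := by
  have : NeZero m := ⟨by omega⟩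
  intro t ht
  obtain ⟨s, hts, hs⟩ : ∃ s : ℕ, t ≤ s * m ∧ (s : ℕ∞) ≤ H.lineGraph.chromaticNumber := by
    have := ht.trans (MG.chromaticNumber_lineGraph_mul_le H m)
    cases hχ : H.lineGraph.chromaticNumber using ENat.recTopCoe with
    | top => exact ⟨t, Nat.le_mul_of_pos_right t (by omega), le_top⟩
    | coe n => exact ⟨n, by rw [hχ] at this; exact_mod_cast this, le_rfl⟩
  exact ((hAKL s hs).blowup m).mono (MG.blowup_lineGraph_isSubgraphOf H m)
    (MG.completeMG_isSubgraphOf_blowup hts)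
end

section
/- Let H be a simple graph with chromatic index χ'(H) ≥ t. Then H contains a set of t connected subgraphs, each with at least one edge, that are pairwise edge-disjoint but pairwise have at least one vertex in common. -/
/-!
By compactness it suffices to consider a finite set `E` of edges of `H` that is not
`k`-edge-colourable, `k = t - 1`, and we may take `E` critical: deleting any edge makes it
`k`-colourable. By Vizing's theorem some vertex `v` has degree at least `k`. If its degree exceeds
`k`, then `t` edges at `v` are the required subgraphs. Otherwise it is `k`, and the edges avoiding
`v` form a connected set meeting every edge at `v`: else `E` splits at `v` into two nonempty sides,
both `k`-colourable by criticality, and after permuting the colours of one side so that the `k`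
edges at `v` get distinct colours the two colourings glue to a `k`-colouring of `E`. The `k` edges
at `v` together with this set are then the `t` subgraphs.

Vizing's theorem is proved by the classical argument: a new edge `x y₀` is coloured by rotating
the colours along a maximal fan at `x`, after swapping one alternating two-coloured component.
-/

theorem SimpleGraph.eq_or_eq_of_reachable_of_subsingleton {V : Type*} {G : SimpleGraph V}
    (hG : ∀ z a b c, G.Adj z a → G.Adj z b → G.Adj z c → a = b ∨ a = c ∨ b = c)
    {u w x : V} (hu : (G.neighborSet u).Subsingleton) (hw : (G.neighborSet w).Subsingleton)
    (hx : (G.neighborSet x).Subsingleton) (hne : u ≠ w) (huw : G.Reachable u w)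
    (hux : G.Reachable u x) : x = u ∨ x = w := by
  obtain ⟨p, hp⟩ := huw.exists_isPath
  have hlen : 0 < p.length := Nat.pos_of_ne_zero fun h => hne (p.eq_of_length_eq_zero h)
  have adj_pred : ∀ n, 0 < n → n ≤ p.length → G.Adj (p.getVert n) (p.getVert (n - 1)) :=
    fun n h0 hn => by
      simpa [Nat.sub_add_cancel h0] using (p.adj_getVert_succ (i := n - 1) (by omega)).symm
  have injOn : ∀ {m n}, m ≤ p.length → n ≤ p.length → p.getVert m = p.getVert n → m = n :=
    fun hm hn h => hp.getVert_injOn hm hn h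
  have neighbor_mem : ∀ n ≤ p.length, ∀ z, G.Adj (p.getVert n) z → z ∈ p.support := by
    intro n hn z hz
    rcases Nat.eq_zero_or_pos n with rfl | h0
    · rw [p.getVert_zero] at hz
      rw [hu hz (by simpa using p.adj_getVert_succ hlen)]
      exact p.getVert_mem_support 1
    rcases hn.lt_or_eq with hlt | rfl
    · rcases hG _ _ _ _ hz (adj_pred n h0 hn) (p.adj_getVert_succ hlt) with h | h | h
      · exact h ▸ p.getVert_mem_support _
      · exact h ▸ p.getVert_mem_support _
      · exact absurd (injOn (by omega) (by omega) h) (by omega)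
    · rw [p.getVert_length] at hz
      rw [hw hz (by simpa using adj_pred _ hlen le_rfl)]
      exact p.getVert_mem_support _
  have hx_mem : x ∈ p.support := by
    by_contra hxs
    obtain ⟨q⟩ := hux
    obtain ⟨d, -, hd₁, hd₂⟩ := q.exists_boundary_dart {z | z ∈ p.support} p.start_mem_support hxs
    obtain ⟨n, hn, hnl⟩ := SimpleGraph.Walk.mem_support_iff_exists_getVert.1 hd₁
    exact hd₂ (neighbor_mem n hnl _ (hn ▸ d.adj))
  obtain ⟨n, rfl, hn⟩ := SimpleGraph.Walk.mem_support_iff_exists_getVert.1 hx_mem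
  by_contra! h
  have h0 : 0 < n := Nat.pos_of_ne_zero fun h0 => h.1 (by rw [h0, p.getVert_zero])
  have hlt : n < p.length := hn.lt_of_ne fun hl => h.2 (by rw [hl, p.getVert_length])
  exact absurd (injOn (by omega) (by omega) (hx (adj_pred n h0 hn) (p.adj_getVert_succ hlt)))
    (by omega)

theorem SimpleGraph.colorable_of_forall_finset {W : Type*} (G : SimpleGraph W) {n : ℕ}
    (h : ∀ s : Finset W, ∃ C : W → Fin n, ∀ a ∈ s, ∀ b ∈ s, G.Adj a b → C a ≠ C b) :
    G.Colorable n :=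
  SimpleGraph.nonempty_hom_of_forall_finite_subgraph_hom fun G' hG' =>
    ⟨fun a => (h hG'.toFinset).choose a, fun {a b} hab =>
      (h hG'.toFinset).choose_spec a (hG'.mem_toFinset.2 a.2) b (hG'.mem_toFinset.2 b.2)
        (G'.adj_sub hab)⟩

theorem Relation.ReflTransGen.subtype {α : Type*} {p : α → Prop} {r : α → α → Prop}
    (hr : ∀ a b, r a b → p a ∧ p b) {a b : α} (h : Relation.ReflTransGen r a b) (ha : p a)
    (hb : p b) : Relation.ReflTransGen (fun x y : Subtype p => r x y) ⟨a, ha⟩ ⟨b, hb⟩ := by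
  induction h with
  | refl => exact .refl
  | tail _ hcb ih => exact (ih (hr _ _ hcb).1).tail hcb

theorem Equiv.Perm.exists_forall_apply_notMem {α : Type*} [Fintype α] (A B : Finset α)
    (h : A.card + B.card ≤ Fintype.card α) : ∃ σ : Equiv.Perm α, ∀ b ∈ B, σ b ∉ A := by
  classical
  obtain ⟨B', hB'A, hB'⟩ := Finset.exists_subset_card_eq (s := Aᶜ) (n := B.card)
    (by rw [Finset.card_compl]; omega)
  let e : {x // x ∈ B} ≃ {x // x ∈ B'} := Finset.equivOfCardEq hB'.symm
  exact ⟨e.extendSubtype, fun b hb =>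
    Finset.mem_compl.1 (hB'A (Equiv.extendSubtype_mem e b hb))⟩

section EdgeColoring

open Finset Function

variable {V κ : Type*}

def SharesVertex (e f : Sym2 V) : Prop := ∃ v, v ∈ e ∧ v ∈ f

theorem SharesVertex.symm {e f : Sym2 V} (h : SharesVertex e f) : SharesVertex f e :=
  let ⟨v, hve, hvf⟩ := h; ⟨v, hvf, hve⟩

def IsProperOn (E : Finset (Sym2 V)) (C : Sym2 V → κ) : Prop :=
  ∀ e ∈ E, ∀ f ∈ E, e ≠ f → SharesVertex e f → C e ≠ C f

/- Colourings are total functions on `Sym2 V`, so for `k = 0` not even `∅` is colourable unless `V`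
is empty; this is why `0 < k` is assumed below. -/
def EdgeColorableOn (E : Finset (Sym2 V)) (k : ℕ) : Prop :=
  ∃ C : Sym2 V → Fin k, IsProperOn E C

def edgesAt [DecidableEq V] (E : Finset (Sym2 V)) (v : V) : Finset (Sym2 V) := E.filter (v ∈ ·)

def IsMissing (E : Finset (Sym2 V)) (C : Sym2 V → κ) (v : V) (γ : κ) : Prop :=
  ∀ e ∈ E, v ∈ e → C e ≠ γ

variable {E E' : Finset (Sym2 V)} {C : Sym2 V → κ} {e f : Sym2 V} {u v w x : V} {γ : κ}

@[simp] theorem mem_edgesAt [DecidableEq V] : e ∈ edgesAt E v ↔ e ∈ E ∧ v ∈ e := mem_filter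

theorem IsProperOn.mono (hC : IsProperOn E C) (h : E' ⊆ E) : IsProperOn E' C :=
  fun e he f hf => hC e (h he) f (h hf)

theorem EdgeColorableOn.mono {k : ℕ} (hE : EdgeColorableOn E k) (h : E' ⊆ E) :
    EdgeColorableOn E' k :=
  let ⟨C, hC⟩ := hE; ⟨C, hC.mono h⟩

theorem edgeColorableOn_of_card_le_one {k : ℕ} (h : E.card ≤ 1) (hk : 0 < k) :
    EdgeColorableOn E k :=
  ⟨fun _ => ⟨0, hk⟩, fun e he f hf hne _ => absurd (card_le_one.1 h e he f hf) hne⟩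

theorem IsProperOn.eq_of_apply_eq (hC : IsProperOn E C) (he : e ∈ E) (hf : f ∈ E)
    (hve : v ∈ e) (hvf : v ∈ f) (h : C e = C f) : e = f :=
  by_contra fun hne => hC e he f hf hne ⟨v, hve, hvf⟩ h

theorem IsMissing.mono (h : IsMissing E C v γ) (hE : E' ⊆ E) : IsMissing E' C v γ :=
  fun e he => h e (hE he)

theorem exists_isMissing [DecidableEq V] [Fintype κ]
    (h : (edgesAt E v).card < Fintype.card κ) : ∃ γ, IsMissing E C v γ := by
  classical
  obtain ⟨γ, -, hγ⟩ := exists_mem_notMem_of_card_lt_card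
    (h.trans_le' card_image_le : ((edgesAt E v).image C).card < (univ : Finset κ).card)
  exact ⟨γ, fun e he hve hC => hγ (mem_image.2 ⟨e, mem_edgesAt.2 ⟨he, hve⟩, hC⟩)⟩

theorem IsMissing.insert_update [DecidableEq V] {e₀ : Sym2 V} {γ₀ : κ}
    (h : IsMissing E C v γ) (h₀ : v ∈ e₀ → γ₀ ≠ γ) :
    IsMissing (insert e₀ E) (update C e₀ γ₀) v γ := by
  intro e he hve
  by_cases he₀ : e = e₀
  · subst he₀; simpa using h₀ hve
  · rw [update_of_ne he₀]
    exact h e ((mem_insert.1 he).resolve_left he₀) hve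

theorem IsProperOn.insert_update [DecidableEq V] (hC : IsProperOn E C)
    (hu : IsMissing E C u γ) (hw : IsMissing E C w γ) :
    IsProperOn (insert s(u, w) E) (update C s(u, w) γ) := by
  have key : ∀ f ∈ insert s(u, w) E, f ≠ s(u, w) → SharesVertex s(u, w) f → γ ≠ C f := by
    rintro f hf hne ⟨z, hz, hzf⟩
    have hfE : f ∈ E := (mem_insert.1 hf).resolve_left hne
    rcases Sym2.mem_iff.1 hz with rfl | rfl
    · exact (hu f hfE hzf).symm
    · exact (hw f hfE hzf).symm
  intro e he f hf hne hef
  by_cases he' : e = s(u, w)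
  · subst he'
    rw [update_self, update_of_ne hne.symm]
    exact key f hf hne.symm hef
  by_cases hf' : f = s(u, w)
  · subst hf'
    rw [update_self, update_of_ne hne]
    obtain ⟨z, hze, hzf⟩ := hef
    exact (key e he he' ⟨z, hzf, hze⟩).symm
  rw [update_of_ne he', update_of_ne hf']
  exact hC e ((mem_insert.1 he).resolve_left he') f ((mem_insert.1 hf).resolve_left hf') hne
    hef

section Kempe

variable (C : Sym2 V → κ) (α β : κ) (S : Set V)

open Classical in
noncomputable def kempeSwap [DecidableEq κ] (e : Sym2 V) : κ :=
  if ∃ a ∈ e, a ∈ S then Equiv.swap α β (C e) else C e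

def IsKempeClosed (E : Finset (Sym2 V)) : Prop :=
  ∀ e ∈ E, (C e = α ∨ C e = β) → ∀ a ∈ e, a ∈ S → ∀ b ∈ e, b ∈ S

variable {C α β S}

variable (C α β) in
def kempeGraph (E : Finset (Sym2 V)) : SimpleGraph V :=
  SimpleGraph.fromEdgeSet {e | e ∈ E ∧ (C e = α ∨ C e = β)}

variable (E) in
theorem isKempeClosed_setOf_reachable (x : V) :
    IsKempeClosed C α β {w | (kempeGraph C α β E).Reachable x w} E := by
  intro e he hc a ha hxa b hb
  by_cases hab : a = b
  · rwa [← hab]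
  have hadj : (kempeGraph C α β E).Adj a b := by
    rw [kempeGraph, SimpleGraph.fromEdgeSet_adj, ← (Sym2.mem_and_mem_iff hab).1 ⟨ha, hb⟩]
    exact ⟨⟨he, hc⟩, hab⟩
  exact hxa.trans hadj.reachable

theorem IsProperOn.eq_or_eq_or_eq_of_kempeGraph_adj (hC : IsProperOn E C) {z a b c : V}
    (ha : (kempeGraph C α β E).Adj z a) (hb : (kempeGraph C α β E).Adj z b)
    (hc : (kempeGraph C α β E).Adj z c) : a = b ∨ a = c ∨ b = c := by
  simp only [kempeGraph, SimpleGraph.fromEdgeSet_adj, Set.mem_ofPred_eq] at ha hb hc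
  have key : ∀ a' b', s(z, a') ∈ E → s(z, b') ∈ E → C s(z, a') = C s(z, b') → a' = b' :=
    fun a' b' ha' hb' h =>
      Sym2.congr_right.1
        (hC.eq_of_apply_eq ha' hb' (Sym2.mem_mk_left _ _) (Sym2.mem_mk_left _ _) h)
  rcases ha.1.2 with ha' | ha' <;> rcases hb.1.2 with hb' | hb' <;>
    rcases hc.1.2 with hc' | hc'
  all_goals first
    | exact Or.inl (key _ _ ha.1.1 hb.1.1 (ha'.trans hb'.symm))
    | exact Or.inr (Or.inl (key _ _ ha.1.1 hc.1.1 (ha'.trans hc'.symm)))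
    | exact Or.inr (Or.inr (key _ _ hb.1.1 hc.1.1 (hb'.trans hc'.symm)))

theorem IsProperOn.kempeGraph_neighborSet_subsingleton (hC : IsProperOn E C) {z : V}
    (hz : IsMissing E C z α ∨ IsMissing E C z β) :
    ((kempeGraph C α β E).neighborSet z).Subsingleton := by
  intro a ha b hb
  simp only [SimpleGraph.mem_neighborSet, kempeGraph, SimpleGraph.fromEdgeSet_adj,
    Set.mem_ofPred_eq] at ha hb
  refine Sym2.congr_right.1 (hC.eq_of_apply_eq ha.1.1 hb.1.1 (Sym2.mem_mk_left _ _)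
    (Sym2.mem_mk_left _ _) ?_)
  have key : ∀ γ δ, IsMissing E C z γ → (C s(z, a) = γ ∨ C s(z, a) = δ) →
      (C s(z, b) = γ ∨ C s(z, b) = δ) → C s(z, a) = C s(z, b) := fun γ δ hγ ha' hb' =>
    (ha'.resolve_left (hγ _ ha.1.1 (Sym2.mem_mk_left _ _))).trans
      (hb'.resolve_left (hγ _ hb.1.1 (Sym2.mem_mk_left _ _))).symm
  rcases hz with hz | hz
  · exact key α β hz ha.1.2 hb.1.2
  · exact key β α hz ha.1.2.symm hb.1.2.symm

variable [DecidableEq κ]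

theorem kempeSwap_apply_of_mem (hwS : w ∈ S) (hw : w ∈ e) :
    kempeSwap C α β S e = Equiv.swap α β (C e) :=
  if_pos ⟨w, hw, hwS⟩

theorem kempeSwap_apply_of_notMem (hS : IsKempeClosed C α β S E) (he : e ∈ E) (hwS : w ∉ S)
    (hw : w ∈ e) : kempeSwap C α β S e = C e := by
  rw [kempeSwap]
  split_ifs with h
  · obtain ⟨a, ha, haS⟩ := h
    refine Equiv.swap_apply_of_ne_of_ne (fun hα => ?_) (fun hβ => ?_)
    · exact hwS (hS e he (Or.inl hα) a ha haS w hw)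
    · exact hwS (hS e he (Or.inr hβ) a ha haS w hw)
  · rfl

theorem IsProperOn.kempeSwap (hC : IsProperOn E C) (hS : IsKempeClosed C α β S E) :
    IsProperOn E (kempeSwap C α β S) := by
  rintro e he f hf hne ⟨w, hwe, hwf⟩
  by_cases hwS : w ∈ S
  · rw [kempeSwap_apply_of_mem hwS hwe, kempeSwap_apply_of_mem hwS hwf]
    exact (Equiv.injective _).ne (hC e he f hf hne ⟨w, hwe, hwf⟩)
  · rw [kempeSwap_apply_of_notMem hS he hwS hwe, kempeSwap_apply_of_notMem hS hf hwS hwf]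
    exact hC e he f hf hne ⟨w, hwe, hwf⟩

theorem isMissing_kempeSwap_iff_of_mem (hwS : w ∈ S) :
    IsMissing E (kempeSwap C α β S) w γ ↔ IsMissing E C w (Equiv.swap α β γ) :=
  forall₂_congr fun _ _ => imp_congr_right fun hwe => by
    rw [kempeSwap_apply_of_mem hwS hwe]
    exact not_congr Equiv.swap_apply_eq_iff

theorem isMissing_kempeSwap_iff_of_notMem (hS : IsKempeClosed C α β S E) (hwS : w ∉ S) :
    IsMissing E (kempeSwap C α β S) w γ ↔ IsMissing E C w γ :=
  forall₂_congr fun _ he => imp_congr_right fun hwe => by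
    rw [kempeSwap_apply_of_notMem hS he hwS hwe]

end Kempe

section Fan

/-- A fan at `x` as in Vizing's proof; the edge `x (y 0)`, the one to be coloured, need not lie
in `E`. -/
structure IsFan (E : Finset (Sym2 V)) (C : Sym2 V → κ) (x : V) (y : ℕ → V) (q : ℕ) : Prop where
  ne : ∀ i ≤ q, y i ≠ x
  injOn : Set.InjOn y (Set.Iic q)
  mem : ∀ i < q, s(x, y (i + 1)) ∈ E
  isMissing : ∀ i < q, IsMissing E C (y i) (C s(x, y (i + 1)))

variable {y : ℕ → V} {q : ℕ}

theorem IsFan.of_le (hF : IsFan E C x y q) {j : ℕ} (hj : j ≤ q) : IsFan E C x y j :=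
  ⟨fun i hi => hF.ne i (hi.trans hj), hF.injOn.mono (Set.Iic_subset_Iic.2 hj),
    fun i hi => hF.mem i (hi.trans_le hj), fun i hi => hF.isMissing i (hi.trans_le hj)⟩

theorem IsFan.ne_of_ne (hF : IsFan E C x y q) {i j : ℕ} (hi : i ≤ q) (hj : j ≤ q)
    (hij : i ≠ j) : y i ≠ y j :=
  fun h => hij (hF.injOn (Set.mem_Iic.2 hi) (Set.mem_Iic.2 hj) h)

theorem IsFan.extend (hF : IsFan E C x y q) (hw : ∀ i ≤ q, y i ≠ w) (hwx : w ≠ x)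
    (hmem : s(x, w) ∈ E) (hmiss : IsMissing E C (y q) (C s(x, w))) :
    IsFan E C x (update y (q + 1) w) (q + 1) := by
  have hy : ∀ i ≤ q, update y (q + 1) w i = y i := fun i hi => update_of_ne (by omega) _ _
  refine ⟨fun i hi => ?_, fun i hi j hj hij => ?_, fun i hi => ?_, fun i hi => ?_⟩
  · rcases hi.lt_or_eq with hi | rfl
    · rw [hy i (by omega)]; exact hF.ne i (by omega)
    · rwa [update_self]
  · simp only [Set.mem_Iic] at hi hj
    rcases hi.lt_or_eq with hi | rfl <;> rcases hj.lt_or_eq with hj | rfl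
    · rw [hy i (by omega), hy j (by omega)] at hij
      exact by_contra fun h => hF.ne_of_ne (by omega) (by omega) h hij
    · rw [hy i (by omega), update_self] at hij; exact absurd hij (hw i (by omega))
    · rw [hy j (by omega), update_self] at hij; exact absurd hij.symm (hw j (by omega))
    · rfl
  · rcases Nat.lt_succ_iff_lt_or_eq.1 hi with hi | rfl
    · rw [hy (i + 1) (by omega)]; exact hF.mem i hi
    · rwa [update_self]
  · rcases Nat.lt_succ_iff_lt_or_eq.1 hi with hi | rfl
    · rw [hy (i + 1) (by omega), hy i (by omega)]; exact hF.isMissing i hi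
    · rw [update_self, hy i le_rfl]; exact hmiss

theorem IsFan.exists_isProperOn_insert [DecidableEq V] (hF : IsFan E C x y q)
    (hC : IsProperOn E C) (hx : IsMissing E C x γ) (hy : IsMissing E C (y q) γ) :
    ∃ C' : Sym2 V → κ, IsProperOn (insert s(x, y 0) E) C' := by
  induction q generalizing E C y with
  | zero => exact ⟨_, hC.insert_update hx hy⟩
  | succ q ih =>
    -- colour `x y 0` with the colour of `x y 1` and uncolour `x y 1`
    set E₁ := insert s(x, y 0) (E.erase s(x, y 1))
    set C₁ := update C s(x, y 0) (C s(x, y 1))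
    have hne : ∀ i ≤ q + 1, ∀ j ≤ q + 1, i ≠ j → s(x, y i) ≠ s(x, y j) :=
      fun i hi j hj hij h => hF.ne_of_ne hi hj hij (Sym2.congr_right.1 h)
    have hx₁ : IsMissing (E.erase s(x, y 1)) C x (C s(x, y 1)) := fun e he hxe h =>
      (mem_erase.1 he).1 (hC.eq_of_apply_eq (mem_erase.1 he).2 (hF.mem 0 (by omega)) hxe
        (Sym2.mem_mk_left _ _) h)
    have hC₁ : IsProperOn E₁ C₁ := (hC.mono (erase_subset _ _)).insert_update hx₁
      ((hF.isMissing 0 (by omega)).mono (erase_subset _ _))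
    have lift : ∀ i, 0 < i → i ≤ q + 1 → ∀ c,
        IsMissing E C (y i) c → IsMissing E₁ C₁ (y i) c :=
      fun i h0 hi c h => (h.mono (erase_subset _ _)).insert_update fun hv => by
        rcases Sym2.mem_iff.1 hv with hv | hv
        · exact absurd hv (hF.ne i hi)
        · exact absurd hv (hF.ne_of_ne hi (Nat.zero_le _) (by omega))
    have hF₁ : IsFan E₁ C₁ x (fun i => y (i + 1)) q := by
      refine ⟨fun i hi => hF.ne _ (by omega), fun i hi j hj h => ?_, fun i hi => ?_,
        fun i hi => ?_⟩
      · simp only [Set.mem_Iic] at hi hj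
        exact by_contra fun hij => hF.ne_of_ne (by omega) (by omega) (by omega) h
      · exact mem_insert_of_mem
          (mem_erase.2 ⟨hne _ (by omega) _ (by omega) (by omega), hF.mem _ (by omega)⟩)
      · rw [show C₁ s(x, y (i + 1 + 1)) = C s(x, y (i + 1 + 1)) from
          update_of_ne (hne _ (by omega) _ (by omega) (by omega)) _ _]
        exact lift _ (by omega) (by omega) _ (hF.isMissing _ (by omega))
    have hx' : IsMissing E₁ C₁ x γ := (hx.mono (erase_subset _ _)).insert_update
      fun _ => hx _ (hF.mem 0 (by omega)) (Sym2.mem_mk_left _ _)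
    obtain ⟨C', hC'⟩ := ih hF₁ hC₁ hx' (lift _ (by omega) le_rfl _ hy)
    refine ⟨C', hC'.mono fun e => ?_⟩
    simp only [E₁, mem_insert, mem_erase]
    tauto

theorem IsFan.kempeSwap [DecidableEq κ] {α β : κ} {S : Set V} (hF : IsFan E C x y q)
    (hS : IsKempeClosed C α β S E)
    (h : ∀ i < q, (C s(x, y (i + 1)) ≠ α ∧ C s(x, y (i + 1)) ≠ β) ∨ (x ∉ S ∧ y i ∉ S)) :
    IsFan E (kempeSwap C α β S) x y q := by
  refine ⟨hF.ne, hF.injOn, hF.mem, fun i hi => ?_⟩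
  have hx : x ∈ s(x, y (i + 1)) := Sym2.mem_mk_left _ _
  rcases h i hi with ⟨hα, hβ⟩ | ⟨hxS, hyS⟩
  · have hc : _root_.kempeSwap C α β S s(x, y (i + 1)) = C s(x, y (i + 1)) := by
      by_cases hxS : x ∈ S
      · rw [kempeSwap_apply_of_mem hxS hx, Equiv.swap_apply_of_ne_of_ne hα hβ]
      · exact kempeSwap_apply_of_notMem hS (hF.mem i hi) hxS hx
    rw [hc]
    by_cases hyS : y i ∈ S
    · rw [isMissing_kempeSwap_iff_of_mem hyS, Equiv.swap_apply_of_ne_of_ne hα hβ]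
      exact hF.isMissing i hi
    · exact (isMissing_kempeSwap_iff_of_notMem hS hyS).2 (hF.isMissing i hi)
  · rw [kempeSwap_apply_of_notMem hS (hF.mem i hi) hxS hx,
      isMissing_kempeSwap_iff_of_notMem hS hyS]
    exact hF.isMissing i hi

theorem IsFan.exists_isProperOn_insert_of_color_eq [DecidableEq V] {α β : κ} {j : ℕ}
    (hF : IsFan E C x y q) (hC : IsProperOn E C) (hj : j < q) (hα : IsMissing E C x α)
    (hβ : IsMissing E C (y q) β) (hxβ : C s(x, y (j + 1)) = β) :
    ∃ C' : Sym2 V → κ, IsProperOn (insert s(x, y 0) E) C' := by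
  classical
  set D := kempeGraph C α β E
  have hyj : IsMissing E C (y j) β := hxβ ▸ hF.isMissing j hj
  have hα_ne : ∀ i < q, C s(x, y (i + 1)) ≠ α :=
    fun i hi => hα _ (hF.mem i hi) (Sym2.mem_mk_left _ _)
  have hβ_eq : ∀ i < q, C s(x, y (i + 1)) = β → i = j := fun i hi h => by_contra fun hij =>
    hF.ne_of_ne (by omega) (by omega) (by omega) (Sym2.congr_right.1 (hC.eq_of_apply_eq
      (hF.mem i hi) (hF.mem j hj) (Sym2.mem_mk_left _ _) (Sym2.mem_mk_left _ _)
      (h.trans hxβ.symm)))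
  have hleaf : ∀ z, IsMissing E C z α ∨ IsMissing E C z β → (D.neighborSet z).Subsingleton :=
    fun z hz => hC.kempeGraph_neighborSet_subsingleton hz
  by_cases hxyj : D.Reachable x (y j)
  · -- then `y q` lies in another `α`/`β`-component; swap it and rotate the whole fan
    have hxyq : ¬ D.Reachable x (y q) := fun h => by
      rcases SimpleGraph.eq_or_eq_of_reachable_of_subsingleton
        (fun z a b c => hC.eq_or_eq_or_eq_of_kempeGraph_adj) (hleaf _ (Or.inl hα))
        (hleaf _ (Or.inr hyj)) (hleaf _ (Or.inr hβ)) (hF.ne j hj.le).symm hxyj h with h | h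
      · exact hF.ne q le_rfl h
      · exact hF.ne_of_ne le_rfl hj.le hj.ne' h
    set T : Set V := {w | D.Reachable (y q) w}
    have hT : IsKempeClosed C α β T E := isKempeClosed_setOf_reachable E (y q)
    have hxT : x ∉ T := fun h => hxyq h.symm
    have hyjT : y j ∉ T := fun h => hxyq (hxyj.trans h.symm)
    have hyqT : y q ∈ T := SimpleGraph.Reachable.refl _
    refine (hF.kempeSwap hT fun i hi => ?_).exists_isProperOn_insert (hC.kempeSwap hT)
      (γ := α) ((isMissing_kempeSwap_iff_of_notMem hT hxT).2 hα) ?_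
    · by_cases h : C s(x, y (i + 1)) = β
      · exact Or.inr (hβ_eq i hi h ▸ ⟨hxT, hyjT⟩)
      · exact Or.inl ⟨hα_ne i hi, h⟩
    · rw [isMissing_kempeSwap_iff_of_mem hyqT, Equiv.swap_apply_left]
      exact hβ
  · -- swap the `α`/`β`-component of `x` and rotate the fan up to `y j`
    set S : Set V := {w | D.Reachable x w}
    have hS : IsKempeClosed C α β S E := isKempeClosed_setOf_reachable E x
    have hxS : x ∈ S := SimpleGraph.Reachable.refl _
    refine ((hF.of_le hj.le).kempeSwap hS fun i hi => Or.inl ⟨hα_ne i (by omega), fun h => ?_⟩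
      ).exists_isProperOn_insert (hC.kempeSwap hS) (γ := β) ?_
      ((isMissing_kempeSwap_iff_of_notMem hS hxyj).2 hyj)
    · exact absurd (hβ_eq i (by omega) h) (by omega)
    · rw [isMissing_kempeSwap_iff_of_mem hxS, Equiv.swap_apply_right]
      exact hα

theorem IsProperOn.exists_isProperOn_insert [DecidableEq V]
    (hC : IsProperOn E C) (hE : ∀ e ∈ E, ¬ e.IsDiag) (hmiss : ∀ v, ∃ γ, IsMissing E C v γ)
    {y₀ : V} (hxy : x ≠ y₀) (hxyE : s(x, y₀) ∉ E) :
    ∃ C' : Sym2 V → κ, IsProperOn (insert s(x, y₀) E) C' := by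
  classical
  choose m hm using hmiss
  set P : ℕ → Prop := fun q => ∃ y : ℕ → V, y 0 = y₀ ∧ IsFan E C x y q
  have hP₀ : P 0 := ⟨fun _ => y₀, rfl, fun _ _ => hxy.symm,
    fun i hi j hj _ => by simp only [Set.mem_Iic, nonpos_iff_eq_zero] at hi hj; omega,
    fun _ hi => absurd hi (Nat.not_lt_zero _), fun _ hi => absurd hi (Nat.not_lt_zero _)⟩
  have hbound : ∀ q, P q → q ≤ (edgesAt E x).card := by
    rintro q ⟨y, -, hF⟩
    calc q = (range q).card := (card_range q).symm
      _ ≤ (edgesAt E x).card := card_le_card_of_injOn (fun i => s(x, y (i + 1)))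
          (fun i hi => mem_edgesAt.2 ⟨hF.mem i (mem_range.1 hi), Sym2.mem_mk_left _ _⟩)
          fun i hi j hj h => by_contra fun hij => hF.ne_of_ne
            (mem_range.1 hi) (mem_range.1 hj) (by omega) (Sym2.congr_right.1 h)
  -- a fan at `x` starting at `y₀` of maximal length
  obtain ⟨y, rfl, hF⟩ : P (Nat.findGreatest P (edgesAt E x).card) :=
    Nat.findGreatest_spec (Nat.zero_le _) hP₀
  set q := Nat.findGreatest P (edgesAt E x).card
  have hmax : ¬ P (q + 1) := fun h =>
    Nat.findGreatest_is_greatest (Nat.lt_succ_self q) (hbound _ h) h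
  by_cases hq : IsMissing E C x (m (y q))
  · exact hF.exists_isProperOn_insert hC hq (hm _)
  obtain ⟨e, he, hxe, hce⟩ : ∃ e ∈ E, x ∈ e ∧ C e = m (y q) := by
    simpa [IsMissing] using hq
  obtain ⟨w, rfl⟩ : ∃ w, e = s(x, w) := ⟨_, (Sym2.other_spec' hxe).symm⟩
  by_cases hw : ∃ j ≤ q, y j = w
  · obtain ⟨j, hjq, rfl⟩ := hw
    obtain ⟨j, rfl⟩ := Nat.exists_eq_succ_of_ne_zero (n := j) (by rintro rfl; exact hxyE he)
    exact hF.exists_isProperOn_insert_of_color_eq hC (by omega) (hm x) (hm (y q)) hce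
  · push Not at hw
    refine absurd ⟨update y (q + 1) w, update_of_ne (by omega) _ _,
      hF.extend hw ?_ he (hce ▸ hm _)⟩ hmax
    rintro rfl
    exact hE _ he (Sym2.mk_isDiag_iff.2 rfl)

end Fan

theorem edgeColorableOn_of_forall_card_edgesAt_le [DecidableEq V] {Δ : ℕ}
    (hE : ∀ e ∈ E, ¬ e.IsDiag) (hΔ : ∀ v, (edgesAt E v).card ≤ Δ) :
    EdgeColorableOn E (Δ + 1) := by
  induction E using Finset.induction_on with
  | empty => exact ⟨fun _ => 0, fun e he => absurd he (notMem_empty e)⟩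
  | @insert a E ha ih =>
    have hsub : ∀ v, edgesAt E v ⊆ edgesAt (insert a E) v :=
      fun v => filter_subset_filter _ (subset_insert _ _)
    have hE' : ∀ e ∈ E, ¬ e.IsDiag := fun e he => hE e (mem_insert_of_mem he)
    have hdeg : ∀ v, (edgesAt E v).card ≤ Δ := fun v => (card_le_card (hsub v)).trans (hΔ v)
    obtain ⟨C, hC⟩ := ih hE' hdeg
    induction a using Sym2.ind with
    | _ x y₀ =>
      exact hC.exists_isProperOn_insert hE'
        (fun v => exists_isMissing ((hdeg v).trans_lt (by simp)))
        (fun h => hE _ (mem_insert_self _ _) (Sym2.mk_isDiag_iff.2 h)) ha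

theorem exists_le_card_edgesAt_of_not_edgeColorableOn [DecidableEq V] {k : ℕ}
    (hE : ∀ e ∈ E, ¬ e.IsDiag) (hk : 0 < k) (h : ¬ EdgeColorableOn E k) :
    ∃ v, k ≤ (edgesAt E v).card := by
  obtain ⟨Δ, rfl⟩ := Nat.exists_eq_succ_of_ne_zero hk.ne'
  by_contra! hlt
  exact h (edgeColorableOn_of_forall_card_edgesAt_le hE fun v => Nat.lt_succ_iff.1 (hlt v))

end EdgeColoring

section TouchingFamily

variable {V ι ι' : Type*} {E E' : Set (Sym2 V)} {F : ι → Set (Sym2 V)}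

def AdjWithin (S : Set (Sym2 V)) (e f : Sym2 V) : Prop := e ∈ S ∧ f ∈ S ∧ SharesVertex e f

def EdgeConnected (S : Set (Sym2 V)) : Prop :=
  ∀ a ∈ S, ∀ b ∈ S, Relation.ReflTransGen (AdjWithin S) a b

structure IsTouchingFamily (E : Set (Sym2 V)) (F : ι → Set (Sym2 V)) : Prop where
  subset : ∀ i, F i ⊆ E
  nonempty : ∀ i, (F i).Nonempty
  connected : ∀ i, EdgeConnected (F i)
  disjoint : Pairwise fun i j => Disjoint (F i) (F j)
  touches : Pairwise fun i j => ∃ e ∈ F i, ∃ f ∈ F j, SharesVertex e f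

theorem edgeConnected_singleton (e : Sym2 V) : EdgeConnected {e} := by
  rintro a rfl b rfl
  exact .refl

theorem IsTouchingFamily.mono (hF : IsTouchingFamily E F) (h : E ⊆ E') :
    IsTouchingFamily E' F :=
  { hF with subset := fun i => (hF.subset i).trans h }

theorem IsTouchingFamily.comp (hF : IsTouchingFamily E F) (g : ι' ↪ ι) :
    IsTouchingFamily E (F ∘ g) :=
  ⟨fun _ => hF.subset _, fun _ => hF.nonempty _, fun _ => hF.connected _,
    fun _ _ hij => hF.disjoint (g.injective.ne hij), fun _ _ hij => hF.touches (g.injective.ne hij)⟩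

theorem IsTouchingFamily.exists_fin [Fintype ι] (hF : IsTouchingFamily E F) {t : ℕ}
    (ht : t ≤ Fintype.card ι) : ∃ F' : Fin t → Set (Sym2 V), IsTouchingFamily E F' :=
  let ⟨g⟩ := Function.Embedding.nonempty_of_card_le (by simpa using ht)
  ⟨F ∘ g, hF.comp g⟩

theorem isTouchingFamily_singletons (S : Finset (Sym2 V)) {v : V} (hS : ↑S ⊆ E)
    (hv : ∀ e ∈ S, v ∈ e) : IsTouchingFamily E fun e : S => ({e.1} : Set (Sym2 V)) :=
  ⟨fun e => Set.singleton_subset_iff.2 (hS e.2), fun _ => Set.singleton_nonempty _,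
    fun _ => edgeConnected_singleton _,
    fun _ _ hef => Set.disjoint_singleton.2 (Subtype.val_injective.ne hef),
    fun e f _ => ⟨e, rfl, f, rfl, v, hv e e.2, hv f f.2⟩⟩

theorem IsTouchingFamily.option (hF : IsTouchingFamily E F) {R : Set (Sym2 V)} (hR : R ⊆ E)
    (hRne : R.Nonempty) (hRconn : EdgeConnected R) (hRdisj : ∀ i, Disjoint R (F i))
    (hRtouch : ∀ i, ∃ e ∈ R, ∃ f ∈ F i, SharesVertex e f) :
    IsTouchingFamily E fun o : Option ι => o.elim R F := by
  refine ⟨?_, ?_, ?_, ?_, ?_⟩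
  · rintro (_ | i); exacts [hR, hF.subset i]
  · rintro (_ | i); exacts [hRne, hF.nonempty i]
  · rintro (_ | i); exacts [hRconn, hF.connected i]
  · rintro (_ | i) (_ | j) hij
    · exact absurd rfl hij
    · exact hRdisj j
    · exact (hRdisj i).symm
    · exact hF.disjoint fun h => hij (congrArg some h)
  · rintro (_ | i) (_ | j) hij
    · exact absurd rfl hij
    · exact hRtouch j
    · obtain ⟨e, he, f, hf, hef⟩ := hRtouch i
      exact ⟨f, hf, e, he, hef.symm⟩
    · exact hF.touches fun h => hij (congrArg some h)

end TouchingFamily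

section Critical

open Finset

variable {V : Type*} [DecidableEq V] {E : Finset (Sym2 V)} {k : ℕ} {v : V}

theorem EdgeColorableOn.union {A B : Finset (Sym2 V)} (hA : EdgeColorableOn A k)
    (hB : EdgeColorableOn B k) (hAB : ∀ a ∈ A, ∀ b ∈ B, ∀ w ∈ a, w ∈ b → w = v)
    (hv : (edgesAt A v).card + (edgesAt B v).card ≤ k) : EdgeColorableOn (A ∪ B) k := by
  obtain ⟨CA, hCA⟩ := hA
  obtain ⟨CB, hCB⟩ := hB
  obtain ⟨σ, hσ⟩ := Equiv.Perm.exists_forall_apply_notMem ((edgesAt A v).image CA)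
    ((edgesAt B v).image CB) (by simpa using (add_le_add card_image_le card_image_le).trans hv)
  have cross : ∀ a ∈ A, ∀ b ∈ B, SharesVertex a b → CA a ≠ σ (CB b) := by
    rintro a ha b hb ⟨w, hwa, hwb⟩ h
    obtain rfl := hAB a ha b hb w hwa hwb
    exact hσ _ (mem_image_of_mem _ (mem_edgesAt.2 ⟨hb, hwb⟩))
      (h ▸ mem_image_of_mem _ (mem_edgesAt.2 ⟨ha, hwa⟩))
  refine ⟨fun e => if e ∈ A then CA e else σ (CB e), fun e he f hf hne hef => ?_⟩
  have hB' : ∀ e ∈ A ∪ B, e ∉ A → e ∈ B := fun e he h => (mem_union.1 he).resolve_left h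
  by_cases heA : e ∈ A <;> by_cases hfA : f ∈ A <;> simp only [heA, hfA, if_true, if_false]
  · exact hCA e heA f hfA hne hef
  · exact cross e heA f (hB' f hf hfA) hef
  · exact (cross f hfA e (hB' e he heA) hef.symm).symm
  · exact σ.injective.ne (hCB e (hB' e he heA) f (hB' f hf hfA) hne hef)

def IsEdgeCritical (E : Finset (Sym2 V)) (k : ℕ) : Prop :=
  ¬ EdgeColorableOn E k ∧ ∀ e ∈ E, EdgeColorableOn (E.erase e) k

theorem exists_isEdgeCritical_subset (h : ¬ EdgeColorableOn E k) :
    ∃ E₀ ⊆ E, IsEdgeCritical E₀ k := by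
  induction E using Finset.strongInduction with
  | H E ih =>
    by_cases hc : ∀ e ∈ E, EdgeColorableOn (E.erase e) k
    · exact ⟨E, subset_rfl, h, hc⟩
    push Not at hc
    obtain ⟨e, he, hce⟩ := hc
    obtain ⟨E₀, hsub, hcrit⟩ := ih _ (erase_ssubset he) hce
    exact ⟨E₀, hsub.trans (erase_subset _ _), hcrit⟩

/-- A critical edge set does not split at a vertex of degree at most `k`: gluing colourings of the
two sides would colour it. -/
theorem IsEdgeCritical.eq_of_closed (hE : IsEdgeCritical E k) (hv : (edgesAt E v).card ≤ k)
    {A : Finset (Sym2 V)} (hAE : A ⊆ E) (hA : A.Nonempty)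
    (hclosed : ∀ a ∈ A, ∀ b ∈ E, ∀ w ∈ a, w ∈ b → w ≠ v → b ∈ A) : A = E := by
  by_contra hne
  obtain ⟨b, hbE, hbA⟩ := exists_of_ssubset (hAE.ssubset_of_ne hne)
  obtain ⟨a, ha⟩ := hA
  apply hE.1
  rw [← union_sdiff_of_subset hAE]
  refine EdgeColorableOn.union (v := v) ((hE.2 b hbE).mono fun x hx => ?_)
    ((hE.2 a (hAE ha)).mono fun x hx => ?_) (fun a' ha' b' hb' w hwa hwb => ?_) ?_
  · exact mem_erase.2 ⟨fun h => hbA (h ▸ hx), hAE hx⟩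
  · exact mem_erase.2 ⟨fun h => (mem_sdiff.1 hx).2 (h ▸ ha), (mem_sdiff.1 hx).1⟩
  · by_contra hw
    exact (mem_sdiff.1 hb').2 (hclosed a' ha' b' (mem_sdiff.1 hb').1 w hwa hwb hw)
  · rw [edgesAt, edgesAt, ← card_union_of_disjoint (disjoint_filter_filter disjoint_sdiff),
      ← filter_union, union_sdiff_of_subset hAE]
    exact hv

theorem IsEdgeCritical.exists_mem_notMem (hE : IsEdgeCritical E k) (hk : 0 < k)
    (hv : (edgesAt E v).card ≤ k) : ∃ a ∈ E, v ∉ a := by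
  by_contra! hR
  have hcard : 1 < E.card := by
    by_contra! h
    exact hE.1 (edgeColorableOn_of_card_le_one h hk)
  obtain ⟨a, ha, b, hb, hab⟩ := one_lt_card.1 hcard
  have hEa := hE.eq_of_closed hv (singleton_subset_iff.2 ha) (singleton_nonempty a)
    fun a' ha' b' hb' w hwa hwb hwv => by
      rw [mem_singleton] at ha' ⊢
      subst ha'
      exact ((Sym2.mem_and_mem_iff hwv).1 ⟨hwb, hR b' hb'⟩).trans
        ((Sym2.mem_and_mem_iff hwv).1 ⟨hwa, hR _ ha⟩).symm
  exact hab (mem_singleton.1 (hEa ▸ hb)).symm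

theorem IsEdgeCritical.exists_reflTransGen (hE : IsEdgeCritical E k) (hv : (edgesAt E v).card ≤ k)
    {a₀ : Sym2 V} (ha₀ : a₀ ∈ E) (hva₀ : v ∉ a₀) {b : Sym2 V} (hb : b ∈ E) :
    ∃ f ∈ {e | e ∈ E ∧ v ∉ e}, Relation.ReflTransGen (AdjWithin {e | e ∈ E ∧ v ∉ e}) a₀ f ∧
      (f = b ∨ v ∈ b ∧ SharesVertex f b) := by
  classical
  set r := AdjWithin {e | e ∈ E ∧ v ∉ e}
  have hmem : ∀ f, Relation.ReflTransGen r a₀ f → f ∈ E ∧ v ∉ f := by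
    intro f hf
    induction hf with
    | refl => exact ⟨ha₀, hva₀⟩
    | tail _ h _ => exact h.2.1
  -- `A` is closed under sharing vertices other than `v`, hence it is all of `E`
  set A := E.filter fun b =>
    ∃ f, Relation.ReflTransGen r a₀ f ∧ (f = b ∨ v ∈ b ∧ SharesVertex f b)
  suffices hA : A = E from
    let ⟨f, hf, hfb⟩ := (mem_filter.1 (hA ▸ hb : b ∈ A)).2; ⟨f, hmem f hf, hf, hfb⟩
  refine hE.eq_of_closed hv (filter_subset _ _)
    ⟨a₀, mem_filter.2 ⟨ha₀, a₀, .refl, Or.inl rfl⟩⟩ fun a ha b hb w hwa hwb hwv => ?_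
  obtain ⟨-, f, hf, haf⟩ := mem_filter.1 ha
  have hfR := hmem f hf
  have hwf : w ∈ f := by
    rcases haf with rfl | ⟨hva, u, huf, hua⟩
    · exact hwa
    -- `a` passes through `v`, so `u` and `w` are both its other end
    have hu : u ≠ v := fun h => hfR.2 (h ▸ huf)
    have : u = w := Sym2.congr_left.1 (((Sym2.mem_and_mem_iff hu).1 ⟨hua, hva⟩).symm.trans
      ((Sym2.mem_and_mem_iff hwv).1 ⟨hwa, hva⟩))
    exact this ▸ huf
  refine mem_filter.2 ⟨hb, ?_⟩
  by_cases hvb : v ∈ b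
  · exact ⟨f, hf, Or.inr ⟨hvb, w, hwf, hwb⟩⟩
  · exact ⟨b, hf.tail ⟨hfR, ⟨hb, hvb⟩, w, hwf, hwb⟩, Or.inl rfl⟩

theorem IsEdgeCritical.exists_isTouchingFamily (hE : IsEdgeCritical E k) (hk : 0 < k)
    (hv : (edgesAt E v).card = k) :
    ∃ F : Fin (k + 1) → Set (Sym2 V), IsTouchingFamily ↑E F := by
  set R : Set (Sym2 V) := {e | e ∈ E ∧ v ∉ e}
  obtain ⟨a₀, ha₀, hva₀⟩ := hE.exists_mem_notMem hk hv.le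
  have hconn : EdgeConnected R := by
    have : Std.Symm (AdjWithin R) := ⟨fun e f h => ⟨h.2.1, h.1, h.2.2.symm⟩⟩
    have hreach : ∀ a ∈ R, Relation.ReflTransGen (AdjWithin R) a₀ a := fun a ha => by
      obtain ⟨f, -, hf, rfl | ⟨hva, -⟩⟩ := hE.exists_reflTransGen hv.le ha₀ hva₀ ha.1
      · exact hf
      · exact absurd hva ha.2
    exact fun a ha b hb => (Std.Symm.symm _ _ (hreach a ha)).trans (hreach b hb)
  have htouch : ∀ e ∈ edgesAt E v, ∃ f ∈ R, SharesVertex f e := fun e he => by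
    obtain ⟨f, hfR, -, rfl | ⟨-, hfe⟩⟩ :=
      hE.exists_reflTransGen hv.le ha₀ hva₀ (mem_edgesAt.1 he).1
    · exact absurd (mem_edgesAt.1 he).2 hfR.2
    · exact ⟨f, hfR, hfe⟩
  refine ((isTouchingFamily_singletons (edgesAt E v) (fun e he => (mem_edgesAt.1 he).1)
    fun e he => (mem_edgesAt.1 he).2).option (R := R) (fun e he => he.1) ⟨a₀, ha₀, hva₀⟩ hconn
    (fun e => Set.disjoint_singleton_right.2 fun h => h.2 (mem_edgesAt.1 e.2).2)
    fun e => ?_).exists_fin (by simp [hv])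
  obtain ⟨f, hf, hfe⟩ := htouch e e.2
  exact ⟨f, hf, e, rfl, hfe⟩

end Critical

theorem exists_isTouchingFamily_of_not_edgeColorableOn {V : Type*} {E : Finset (Sym2 V)} {k : ℕ}
    (hE : ∀ e ∈ E, ¬ e.IsDiag) (hk : 0 < k) (h : ¬ EdgeColorableOn E k) :
    ∃ F : Fin (k + 1) → Set (Sym2 V), IsTouchingFamily ↑E F := by
  classical
  obtain ⟨E₀, hE₀, hcrit⟩ := exists_isEdgeCritical_subset h
  suffices ∃ F : Fin (k + 1) → Set (Sym2 V), IsTouchingFamily ↑E₀ F from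
    let ⟨F, hF⟩ := this; ⟨F, hF.mono (Finset.coe_subset.2 hE₀)⟩
  by_cases hbig : ∃ v, k + 1 ≤ (edgesAt E₀ v).card
  · obtain ⟨v, hv⟩ := hbig
    exact (isTouchingFamily_singletons (edgesAt E₀ v) (fun e he => (mem_edgesAt.1 he).1)
      fun e he => (mem_edgesAt.1 he).2).exists_fin (by simpa using hv)
  · push Not at hbig
    obtain ⟨v, hv⟩ :=
      exists_le_card_edgesAt_of_not_edgeColorableOn (fun e he => hE e (hE₀ he)) hk hcrit.1
    exact hcrit.exists_isTouchingFamily hk (le_antisymm (Nat.lt_succ_iff.1 (hbig v)) hv)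

theorem SimpleGraph.toMG_edgeColorable_of_forall_finset {V : Type} (H : SimpleGraph V) {k : ℕ}
    (h : ∀ E : Finset (Sym2 V), ↑E ⊆ H.edgeSet → EdgeColorableOn E k) :
    H.toMG.EdgeColorable k := by
  obtain ⟨C⟩ := H.lineGraph.colorable_of_forall_finset fun s => by
    obtain ⟨C, hC⟩ := h (s.map (Function.Embedding.subtype _)) fun e he => by
      obtain ⟨e, -, rfl⟩ := Finset.mem_map.1 he
      exact e.2
    refine ⟨fun e => C e, fun a ha b hb hab => ?_⟩
    obtain ⟨hne, hshare⟩ := lineGraph_adj_iff_exists.1 hab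
    exact hC a (Finset.mem_map_of_mem _ ha) b (Finset.mem_map_of_mem _ hb)
      (Subtype.val_injective.ne hne) hshare
  exact ⟨C, fun e f hne hshare => C.valid (lineGraph_adj_iff_exists.2 ⟨hne, hshare⟩)⟩

theorem IsTouchingFamily.exists_toMG {V : Type} {H : SimpleGraph V} {ι : Type*}
    {F : ι → Set (Sym2 V)} (hF : IsTouchingFamily H.edgeSet F) :
    ∃ F' : ι → Set (SimpleGraph.toMG H).E,
      (∀ i, (F' i).Nonempty) ∧
      (∀ i, (SimpleGraph.toMG H).ConnEdges (F' i)) ∧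
      (Pairwise fun i j => Disjoint (F' i) (F' j)) ∧
      (∀ i j, i ≠ j → ∃ v, (∃ e ∈ F' i, v ∈ (SimpleGraph.toMG H).ends e) ∧
        (∃ e ∈ F' j, v ∈ (SimpleGraph.toMG H).ends e)) := by
  refine ⟨fun i => Subtype.val ⁻¹' F i, fun i => ?_, fun i a ha b hb => ?_,
    fun i j hij => (hF.disjoint hij).preimage _, fun i j hij => ?_⟩
  · obtain ⟨e, he⟩ := hF.nonempty i
    exact ⟨⟨e, hF.subset i he⟩, he⟩
  · exact Relation.ReflTransGen.subtype (p := (· ∈ H.edgeSet))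
      (fun e f h => ⟨hF.subset i h.1, hF.subset i h.2.1⟩) (hF.connected i a.1 ha b.1 hb) a.2 b.2
  · obtain ⟨e, he, f, hf, v, hve, hvf⟩ := hF.touches hij
    exact ⟨v, ⟨⟨e, hF.subset i he⟩, he, hve⟩, ⟨⟨f, hF.subset j hf⟩, hf, hvf⟩⟩

/-- a simple graph `H` with `χ'(H) ≥ t` contains `t` connected
subgraphs, each with at least one edge, pairwise edge-disjoint but pairwise
sharing at least one vertex. -/
theorem simple_chromIndex_subgraphs {V : Type} (H : SimpleGraph V) (t : ℕ)
    (hchi : ∀ n < t, ¬ (SimpleGraph.toMG H).EdgeColorable n) :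
    ∃ F : Fin t → Set (SimpleGraph.toMG H).E,
      (∀ i, (F i).Nonempty) ∧
      (∀ i, (SimpleGraph.toMG H).ConnEdges (F i)) ∧
      (Pairwise fun i j => Disjoint (F i) (F j)) ∧
      (∀ i j, i ≠ j → ∃ v, (∃ e ∈ F i, v ∈ (SimpleGraph.toMG H).ends e) ∧
        (∃ e ∈ F j, v ∈ (SimpleGraph.toMG H).ends e)) := by
  suffices ∃ F : Fin t → Set (Sym2 V), IsTouchingFamily H.edgeSet F from
    let ⟨_, hF⟩ := this; hF.exists_toMG
  rcases t with _ | _ | k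
  · exact ⟨Fin.elim0, fun i => i.elim0, fun i => i.elim0, fun i => i.elim0, fun i => i.elim0,
      fun i => i.elim0⟩
  · obtain ⟨e, he⟩ : H.edgeSet.Nonempty := by
      by_contra! h
      have hE (e : (SimpleGraph.toMG H).E) : False := Set.eq_empty_iff_forall_notMem.1 h e.1 e.2
      exact hchi 0 one_pos ⟨fun e => (hE e).elim, fun e => (hE e).elim⟩
    exact (isTouchingFamily_singletons {e} (v := e.out.1) (by simpa using he)
      fun f hf => by rw [Finset.mem_singleton.1 hf]; exact e.out_fst_mem).exists_fin (by simp)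
  · obtain ⟨E, hEH, hE⟩ : ∃ E : Finset (Sym2 V), ↑E ⊆ H.edgeSet ∧ ¬ EdgeColorableOn E (k + 1) := by
      by_contra! h
      exact hchi (k + 1) (by omega) (H.toMG_edgeColorable_of_forall_finset h)
    obtain ⟨F, hF⟩ := exists_isTouchingFamily_of_not_edgeColorableOn
      (fun e he => H.not_isDiag_of_mem_edgeSet (hEH he)) k.succ_pos hE
    exact ⟨F, hF.mono hEH⟩
end

section
/- If L(H) contains K_t as a minor, then for any m ≥ 2, L(mH) contains K_{mt} as a minor. -/
/-!
A `K_t`-minor of `L(H)` is a family of `t` pairwise disjoint, connected sets of edges of `H`, any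
two of them containing a pair of adjacent edges. In `L(mH)` take the `m` parallel copies of each
of these branch sets: copies of different branch sets are joined as in `H`, and two copies of the
same branch set are joined because parallel edges are adjacent in the line graph.
-/

namespace MG

variable {H : MG} {m : ℕ}

theorem lineGraph_mul_adj_of_adj {a b : H.E} (hab : H.lineGraph.Adj a b) (i j : Fin m) :
    (H.mul m).lineGraph.Adj (a, i) (b, j) :=
  ⟨fun h => hab.1 (congrArg Prod.fst h), hab.2⟩

theorem lineGraph_mul_adj_of_ne (a : H.E) {i j : Fin m} (hij : i ≠ j) :
    (H.mul m).lineGraph.Adj (a, i) (a, j) :=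
  ⟨fun h => hij (congrArg Prod.snd h), (H.ends a).out.1, Sym2.out_fst_mem _, Sym2.out_fst_mem _⟩

end MG

namespace SimpleGraph

variable {V : Type} {G : SimpleGraph V}

theorem toMG_adjv_iff {x y : V} : G.toMG.Adjv x y ↔ G.Adj x y :=
  ⟨fun ⟨e, he⟩ => G.mem_edgeSet.1 (he ▸ e.2), fun h => ⟨⟨s(x, y), h⟩, rfl⟩⟩

structure CliqueModel (G : SimpleGraph V) (ι : Type) where
  branch : ι → Set V
  branch_nonempty : ∀ u, (branch u).Nonempty
  connIn_branch : ∀ u, G.toMG.ConnIn (branch u)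
  pairwise_disjoint : Pairwise fun u v => Disjoint (branch u) (branch v)
  exists_adj : Pairwise fun u v => ∃ a ∈ branch u, ∃ b ∈ branch v, G.Adj a b

namespace CliqueModel

variable {ι κ : Type} (M : G.CliqueModel ι)

theorem eq_of_mem_branch {u v : ι} {a : V} (hu : a ∈ M.branch u) (hv : a ∈ M.branch v) :
    u = v :=
  by_contra fun h => Set.disjoint_left.1 (M.pairwise_disjoint h) hu hv

def comp (f : κ ↪ ι) : G.CliqueModel κ where
  branch := M.branch ∘ f
  branch_nonempty u := M.branch_nonempty (f u)
  connIn_branch u := M.connIn_branch (f u)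
  pairwise_disjoint := M.pairwise_disjoint.comp_of_injective f.injective
  exists_adj := M.exists_adj.comp_of_injective f.injective

theorem exists_edge_between (z : (⊤ : SimpleGraph ι).edgeSet) :
    ∃ e : G.edgeSet, ∀ u v, z.1 = s(u, v) →
      ∃ a ∈ M.branch u, ∃ b ∈ M.branch v, e.1 = s(a, b) := by
  obtain ⟨z, hz⟩ := z
  induction z using Sym2.ind with
  | _ u₀ v₀ =>
    obtain ⟨a, ha, b, hb, hab⟩ := M.exists_adj ((top_adj _ _).1 hz)
    refine ⟨⟨s(a, b), hab⟩, fun u v huv => ?_⟩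
    rcases Sym2.eq_iff.1 huv with ⟨rfl, rfl⟩ | ⟨rfl, rfl⟩
    · exact ⟨a, ha, b, hb, rfl⟩
    · exact ⟨b, hb, a, ha, Sym2.eq_swap⟩

theorem toMG_minor (M : G.CliqueModel ι) : MG.Minor G.toMG (⊤ : SimpleGraph ι).toMG := by
  choose η hη using M.exists_edge_between
  refine ⟨M.branch, M.branch_nonempty, M.connIn_branch, M.pairwise_disjoint, ⟨η, ?_⟩, hη⟩
  rintro ⟨z, hz⟩ ⟨z', hz'⟩ hzz'
  induction z using Sym2.ind with
  | _ u v =>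
  induction z' using Sym2.ind with
  | _ u' v' =>
    obtain ⟨a, ha, b, hb, hηz⟩ := hη ⟨_, hz⟩ u v rfl
    obtain ⟨a', ha', b', hb', hηz'⟩ := hη ⟨_, hz'⟩ u' v' rfl
    have hab : s(a, b) = s(a', b') := hηz.symm.trans (hzz' ▸ hηz')
    refine Subtype.ext (Sym2.eq_iff.2 ?_)
    rcases Sym2.eq_iff.1 hab with ⟨rfl, rfl⟩ | ⟨rfl, rfl⟩
    · exact .inl ⟨M.eq_of_mem_branch ha ha', M.eq_of_mem_branch hb hb'⟩
    · exact .inr ⟨M.eq_of_mem_branch ha hb', M.eq_of_mem_branch hb ha'⟩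

def mul {H : MG} (M : H.lineGraph.CliqueModel ι) (m : ℕ) :
    (H.mul m).lineGraph.CliqueModel (Fin m × ι) where
  branch p := (·, p.1) '' M.branch p.2
  branch_nonempty p := (M.branch_nonempty p.2).image _
  connIn_branch p := by
    rintro _ ⟨a, ha, rfl⟩ _ ⟨b, hb, rfl⟩
    refine (M.connIn_branch p.2 a ha b hb).lift (·, p.1) ?_
    rintro x y ⟨hx, hy, hxy⟩
    exact ⟨⟨x, hx, rfl⟩, ⟨y, hy, rfl⟩,
      toMG_adjv_iff.2 (MG.lineGraph_mul_adj_of_adj (toMG_adjv_iff.1 hxy) _ _)⟩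
  pairwise_disjoint := by
    rintro ⟨i, u⟩ ⟨j, v⟩ hne
    refine Set.disjoint_left.2 ?_
    rintro _ ⟨a, ha, rfl⟩ ⟨b, hb, hba⟩
    obtain ⟨rfl, rfl⟩ := Prod.ext_iff.1 hba
    exact hne (Prod.ext rfl (M.eq_of_mem_branch ha hb))
  exists_adj := by
    rintro ⟨i, u⟩ ⟨j, v⟩ hne
    by_cases huv : u = v
    · subst huv
      obtain ⟨a, ha⟩ := M.branch_nonempty u
      exact ⟨_, ⟨a, ha, rfl⟩, _, ⟨a, ha, rfl⟩,
        MG.lineGraph_mul_adj_of_ne a fun hij => hne (Prod.ext hij rfl)⟩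
    · obtain ⟨a, ha, b, hb, hab⟩ := M.exists_adj huv
      exact ⟨_, ⟨a, ha, rfl⟩, _, ⟨b, hb, rfl⟩, MG.lineGraph_mul_adj_of_adj hab i j⟩

end CliqueModel

theorem toMG_minor_top_iff {ι : Type} :
    MG.Minor G.toMG (⊤ : SimpleGraph ι).toMG ↔ Nonempty (G.CliqueModel ι) := by
  refine ⟨fun ⟨β, hne, hconn, hdisj, η, hη⟩ => ⟨⟨β, hne, hconn, hdisj, fun u v huv => ?_⟩⟩,
    fun ⟨M⟩ => M.toMG_minor⟩
  obtain ⟨a, ha, b, hb, hab⟩ := hη ⟨s(u, v), (top_adj _ _).2 huv⟩ u v rfl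
  exact ⟨a, ha, b, hb, G.mem_edgeSet.1 (hab ▸ (η ⟨s(u, v), (top_adj _ _).2 huv⟩).2)⟩

end SimpleGraph

theorem lineGraph_mul_clique_minor_general (H : MG) (t : ℕ)
    (h : MG.Minor (SimpleGraph.toMG H.lineGraph) (completeMG t))
    (m : ℕ) :
    MG.Minor (SimpleGraph.toMG (H.mul m).lineGraph) (completeMG (m * t)) := by
  obtain ⟨M⟩ := SimpleGraph.toMG_minor_top_iff.1 h
  exact SimpleGraph.toMG_minor_top_iff.2 ⟨(M.mul m).comp finProdFinEquiv.symm.toEmbedding⟩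

/-- if `L(H)` contains `K_t` as a minor, then `L(mH)` contains
`K_{mt}` as a minor, for any `m ≥ 2`. -/
theorem lineGraph_mul_clique_minor (H : MG) (t : ℕ)
    (h : MG.Minor (SimpleGraph.toMG H.lineGraph) (completeMG t))
    (m : ℕ) (hm : 2 ≤ m) :
    MG.Minor (SimpleGraph.toMG (H.mul m).lineGraph) (completeMG (m * t)) :=
  lineGraph_mul_clique_minor_general H t h m
end

section
/- Let t ≥ 5 and let H be the graph on vertices {x_1, x_2, x_3} ∪ {y_1, …, y_{t−4}} where {x_1, x_2, x_3} induces a triangle and every x_i is adjacent to every y_j (and there are no edges among the y_j). Then L(H) has a K_t-immersion. -/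
/-- The join of a triangle `{x₁, x₂, x₃}` with an independent set
`{y₁, …, y_{t-4}}`. -/
def triangleJoin (t : ℕ) : SimpleGraph (Fin 3 ⊕ Fin (t - 4)) where
  Adj p q := p ≠ q ∧ (p.isLeft ∨ q.isLeft)
  symm := ⟨by rintro p q ⟨h1, h2⟩; exact ⟨Ne.symm h1, h2.symm⟩⟩
  loopless := ⟨by rintro p ⟨h, _⟩; exact h rfl⟩


/-!
Write the vertices of `H` as `x₀, x₁, x₂, y_j`. Take the `t` edges `x₀x₁, x₀x₂, x₁x₂, x₁y₀` and
`x₀y_j` as the branch vertices of `L(H)`. Two of them sharing an endpoint are adjacent in `L(H)`;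
the only other pairs are `x₁x₂, x₀y_j`, which are joined through `x₂y_j`; `x₁y₀, x₀y_j` for
`j ≠ 0`, joined through `x₁y_j`; and `x₀x₂, x₁y₀`, joined through `x₂y₀`. The middle vertices
are not branch vertices, and no edge of `L(H)` lies on two of these paths. Splitting off each
two-edge path therefore turns the subgraph formed by all these edges into `K_t`.
-/

section
variable {X Y : Type} [DecidableEq X] {D : Set Y} {y₀ : Y}

def Equiv.sumInsertMerge (x₀ : X) (hy₀ : y₀ ∉ D) :
    X ⊕ {y // y ∉ insert y₀ D} ≃
      {e : X ⊕ {y // y ∉ D} // e ≠ .inl x₀ ∧ e ≠ .inr ⟨y₀, hy₀⟩} ⊕ Unit where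
  toFun
    | .inl x => if h : x = x₀ then .inr ()
        else .inl ⟨.inl x, fun h' => h (Sum.inl_injective h'), Sum.inl_ne_inr⟩
    | .inr ⟨y, hy⟩ => .inl ⟨.inr ⟨y, fun h => hy (.inr h)⟩, Sum.inr_ne_inl,
        fun h => hy (by cases h; exact .inl rfl)⟩
  invFun
    | .inl ⟨.inl x, _⟩ => .inl x
    | .inl ⟨.inr ⟨y, hy⟩, _, hne⟩ => .inr ⟨y, by rintro (rfl | h); exacts [hne rfl, hy h]⟩
    | .inr () => .inl x₀
  left_inv := by
    rintro (x | ⟨y, hy⟩)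
    · by_cases h : x = x₀
      · subst h; simp
      · simp [h]
    · rfl
  right_inv := by
    rintro (⟨(x | ⟨y, hy⟩), hne, -⟩ | ⟨⟩)
    · exact dif_neg fun h => hne (congrArg Sum.inl h)
    · rfl
    · simp

lemma Equiv.sumInsertMerge_inl_self (x₀ : X) (hy₀ : y₀ ∉ D) :
    Equiv.sumInsertMerge x₀ hy₀ (.inl x₀) = .inr () := by
  simp [Equiv.sumInsertMerge]

lemma Equiv.sumInsertMerge_inl_of_ne {x₀ x : X} (hy₀ : y₀ ∉ D) (h : x ≠ x₀) :
    Equiv.sumInsertMerge x₀ hy₀ (.inl x) =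
      .inl ⟨.inl x, fun h' => h (Sum.inl_injective h'), Sum.inl_ne_inr⟩ := by
  simp [Equiv.sumInsertMerge, h]

end

namespace MG

/-- The edges of `H` indexed by `A` are realised by single edges of `G`, those indexed by `S` by
two-edge paths `first s`, `second s` through `mid s`; no edge of `G` is used twice. -/
structure ShortRouting (G H : MG) (A S : Type) where
  fv : H.V ↪ G.V
  π : A ⊕ S ≃ H.E
  direct : A → G.E
  first : S → G.E
  second : S → G.E
  mid : S → G.V
  src : S → H.V
  tgt : S → H.V
  injective : Function.Injective (Sum.elim (Sum.elim direct first) second)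
  ends_direct : ∀ a, G.ends (direct a) = Sym2.map fv (H.ends (π (.inl a)))
  ends_detour : ∀ s, H.ends (π (.inr s)) = s(src s, tgt s)
  ends_first : ∀ s, G.ends (first s) = s(fv (src s), mid s)
  ends_second : ∀ s, G.ends (second s) = s(mid s, fv (tgt s))

namespace ShortRouting

variable {G H : MG} {A S : Type} (R : ShortRouting G H A S)

lemma src_ne_tgt (s : S) : R.fv (R.src s) ≠ R.fv (R.tgt s) := by
  have h := H.noLoop (R.π (.inr s))
  rw [R.ends_detour, Sym2.mk_isDiag_iff] at h
  exact R.fv.injective.ne h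

open Classical in
/-- The paths indexed by `D` have been split off: the first edge of such a path now joins its
two ends, and its second edge is gone. -/
noncomputable def stage (D : Set S) : MG where
  V := G.V
  E := (A ⊕ S) ⊕ {s // s ∉ D}
  ends
    | .inl (.inl a) => G.ends (R.direct a)
    | .inl (.inr s) => if s ∈ D then s(R.fv (R.src s), R.fv (R.tgt s)) else G.ends (R.first s)
    | .inr s => G.ends (R.second s.1)
  noLoop := by
    rintro ((a | s) | s)
    · exact G.noLoop _
    · dsimp only
      split_ifs
      · simpa [Sym2.mk_isDiag_iff] using R.src_ne_tgt s
      · exact G.noLoop _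
    · exact G.noLoop _

lemma stage_empty_isSubgraphOf : (R.stage ∅).IsSubgraphOf G := by
  refine ⟨Function.Embedding.refl _,
    ⟨_, R.injective.comp (Function.injective_id.sumMap Subtype.val_injective)⟩, ?_⟩
  rintro ((a | s) | s)
  · exact (congrFun Sym2.map_id _).symm
  · exact ((congrFun Sym2.map_id _).trans (if_neg (Set.notMem_empty s))).symm
  · exact (congrFun Sym2.map_id _).symm

lemma stage_insert_ends_inl_of_ne {D : Set S} {s : S} {r : A ⊕ S} (hr : r ≠ .inr s) :
    (R.stage (insert s D)).ends (.inl r) = (R.stage D).ends (.inl r) := by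
  rcases r with a | s'
  · rfl
  · have hs' : s' ≠ s := fun h => hr (congrArg Sum.inr h)
    by_cases h : s' ∈ D <;> simp [stage, h, hs']

lemma splitStep_stage_insert {D : Set S} {s : S} (hs : s ∉ D) :
    SplitStep (R.stage D) (R.stage (insert s D)) := by
  classical
  refine ⟨.inl (.inr s), .inr ⟨s, hs⟩, R.fv (R.src s), R.mid s, R.fv (R.tgt s), R.src_ne_tgt s,
    Sum.inl_ne_inr, by simp [stage, hs, R.ends_first], R.ends_second s, Equiv.refl _,
    Equiv.sumInsertMerge (X := A ⊕ S) (.inr s) hs, ?_⟩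
  rintro (r | ⟨s', h'⟩)
  · by_cases hr : r = .inr s
    · subst hr
      erw [Equiv.sumInsertMerge_inl_self]
      simp only [splitOff, stage, Set.mem_insert, if_true]
      exact (congrFun Sym2.map_id _).symm
    · erw [Equiv.sumInsertMerge_inl_of_ne hs hr, R.stage_insert_ends_inl_of_ne hr]
      exact (congrFun Sym2.map_id _).symm
  · exact (congrFun Sym2.map_id _).symm

lemma reflTransGen_stage_univ [Finite S] :
    Relation.ReflTransGen SplitStep (R.stage ∅) (R.stage Set.univ) :=
  Set.Finite.induction_on (motive := fun D _ => Relation.ReflTransGen SplitStep _ (R.stage D))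
    Set.univ Set.finite_univ .refl fun hs _ ih => ih.tail (R.splitStep_stage_insert hs)

end ShortRouting

theorem ShortRouting.immersion {G H : MG} {A S : Type} [Finite S] (R : G.ShortRouting H A S) :
    G.Immersion H := by
  have : IsEmpty {s : S // s ∉ Set.univ} := ⟨fun s => s.2 (Set.mem_univ _)⟩
  let fe : H.E ≃ (R.stage Set.univ).E := R.π.symm.trans (Equiv.sumEmpty _ _).symm
  have hends : ∀ e, (R.stage Set.univ).ends (fe e) = Sym2.map R.fv (H.ends e) := by
    intro e
    obtain ⟨a | s, rfl⟩ := R.π.surjective e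
    · erw [Equiv.trans_apply, Equiv.symm_apply_apply]
      exact R.ends_direct a
    · erw [Equiv.trans_apply, Equiv.symm_apply_apply]
      rw [R.ends_detour, Sym2.map_mk]
      exact if_pos (Set.mem_univ s)
  refine ⟨R.stage ∅, R.stage Set.univ, R.stage_empty_isSubgraphOf, R.reflTransGen_stage_univ,
    R.fv, fe, hends, fun v hv x hx => ?_⟩
  obtain ⟨e, rfl⟩ := fe.surjective x
  obtain ⟨w, -, rfl⟩ := Sym2.mem_map.mp (hends e ▸ hx)
  exact hv ⟨w, rfl⟩

theorem Immersion.of_iso {G H H' : MG} (h : G.Immersion H) (e : H.Iso H') : G.Immersion H' := by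
  obtain ⟨G₀, G₁, hsub, hsplit, fv, fe, hends, hiso⟩ := h
  obtain ⟨φv, φe, hφ⟩ := e
  refine ⟨G₀, G₁, hsub, hsplit, φv.symm.toEmbedding.trans fv, φe.symm.trans fe, fun e => ?_,
    fun v hv => hiso v fun ⟨x, hx⟩ => hv ⟨φv x, by simpa using hx⟩⟩
  obtain ⟨e, rfl⟩ := φe.surjective e
  simp [hends, hφ, Sym2.map_map]

theorem iso_toMG {V W : Type} {G : SimpleGraph V} {G' : SimpleGraph W} (f : G ≃g G') :
    MG.Iso G.toMG G'.toMG :=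
  ⟨f.toEquiv, f.mapEdgeSet, fun _ => rfl⟩

end MG

namespace triangleJoin

variable {t : ℕ}

def edge (i : Fin 3) (v : Fin 3 ⊕ Fin (t - 4)) (h : .inl i ≠ v) : (triangleJoin t).edgeSet :=
  ⟨s(.inl i, v), h, .inl rfl⟩

def terminal (y₀ : Fin (t - 4)) : Fin 4 ⊕ Fin (t - 4) → (triangleJoin t).edgeSet
  | .inl 0 => edge 0 (.inl 1) (by simp)
  | .inl 1 => edge 0 (.inl 2) (by simp)
  | .inl 2 => edge 1 (.inl 2) (by simp)
  | .inl 3 => edge 1 (.inr y₀) Sum.inl_ne_inr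
  | .inr j => edge 0 (.inr j) Sum.inl_ne_inr

abbrev Detour (y₀ : Fin (t - 4)) : Type := Fin (t - 4) ⊕ {j // j ≠ y₀} ⊕ Unit

variable {y₀ : Fin (t - 4)}

namespace Detour

def src : Detour y₀ → Fin 4 ⊕ Fin (t - 4)
  | .inl _ => .inl 2
  | .inr (.inl _) => .inl 3
  | .inr (.inr _) => .inl 1

def tgt : Detour y₀ → Fin 4 ⊕ Fin (t - 4)
  | .inl j => .inr j
  | .inr (.inl j) => .inr j
  | .inr (.inr _) => .inl 3

def mid : Detour y₀ → (triangleJoin t).edgeSet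
  | .inl j => edge 2 (.inr j) Sum.inl_ne_inr
  | .inr (.inl j) => edge 1 (.inr j) Sum.inl_ne_inr
  | .inr (.inr _) => edge 2 (.inr y₀) Sum.inl_ne_inr

end Detour

lemma terminal_injective : Function.Injective (terminal y₀) := by
  rintro (i | j) (i' | j') h <;> (try fin_cases i) <;> (try fin_cases i') <;>
    simp_all [terminal, edge, Subtype.ext_iff]

lemma exists_mem_terminal_of_ne_detour {x y : Fin 4 ⊕ Fin (t - 4)}
    (h : ∀ s : Detour y₀, s(s.src, s.tgt) ≠ s(x, y)) :
    ∃ v, v ∈ (terminal y₀ x).1 ∧ v ∈ (terminal y₀ y).1 := by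
  have hR : ∀ j, s(x, y) ≠ s(.inl 2, .inr j) := fun j => (h (.inl j)).symm
  have hQ : ∀ j, s(x, y) = s(.inl 3, .inr j) → j = y₀ :=
    fun j hj => by_contra fun hne => h (.inr (.inl ⟨j, hne⟩)) hj.symm
  have hB : s(x, y) ≠ s(.inl 1, .inl 3) := (h (.inr (.inr ()))).symm
  clear h
  rcases x with i | j <;> rcases y with i' | j' <;> (try fin_cases i) <;> (try fin_cases i') <;>
    simp_all [terminal, edge, Sym2.eq_swap]

namespace Detour

lemma src_ne_tgt (s : Detour y₀) : s.src ≠ s.tgt := by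
  rcases s with j | j | _ <;> simp [src, tgt]

lemma mid_notMem_range_terminal (s : Detour y₀) : s.mid ∉ Set.range (terminal y₀) := by
  rintro ⟨i | j, h⟩ <;> (try fin_cases i) <;> rcases s with j' | ⟨j', hj'⟩ | ⟨⟩ <;>
    simp_all [terminal, edge, mid, Subtype.ext_iff, eq_comm (a := y₀)]

lemma mid_notMem_map_terminal (s : Detour y₀) (p : Sym2 (Fin 4 ⊕ Fin (t - 4))) :
    s.mid ∉ Sym2.map (terminal y₀) p := fun h =>
  let ⟨_, _, hx⟩ := Sym2.mem_map.mp h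
  s.mid_notMem_range_terminal ⟨_, hx⟩

lemma lineGraph_adj_terminal_src_mid (s : Detour y₀) :
    ((triangleJoin t).toMG).lineGraph.Adj (terminal y₀ s.src) s.mid := by
  refine ⟨fun h => s.mid_notMem_range_terminal ⟨_, h⟩, ?_⟩
  show ∃ v, v ∈ (terminal y₀ s.src).1 ∧ v ∈ s.mid.1
  rcases s with j | j | _ <;> simp [src, mid, terminal, edge]

lemma lineGraph_adj_mid_terminal_tgt (s : Detour y₀) :
    ((triangleJoin t).toMG).lineGraph.Adj s.mid (terminal y₀ s.tgt) := by
  refine ⟨fun h => s.mid_notMem_range_terminal ⟨_, h.symm⟩, ?_⟩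
  show ∃ v, v ∈ s.mid.1 ∧ v ∈ (terminal y₀ s.tgt).1
  rcases s with j | j | _ <;> simp [tgt, mid, terminal, edge]

lemma terminal_mid_eq_iff {s s' : Detour y₀} {x x' : Fin 4 ⊕ Fin (t - 4)} :
    s(terminal y₀ x, s.mid) = s(terminal y₀ x', s'.mid) ↔ x = x' ∧ s.mid = s'.mid := by
  refine ⟨fun h => ?_, fun ⟨hx, hm⟩ => by rw [hx, hm]⟩
  rcases Sym2.eq_iff.mp h with ⟨hx, hm⟩ | ⟨hx, -⟩
  · exact ⟨terminal_injective hx, hm⟩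
  · exact (s'.mid_notMem_range_terminal ⟨x, hx⟩).elim

lemma eq_of_mid_eq {s s' : Detour y₀} (h : s.mid = s'.mid)
    (hst : s.src = s'.src ∨ s.tgt = s'.tgt) : s = s' := by
  rcases s with j | ⟨j, hj⟩ | ⟨⟩ <;> rcases s' with j' | ⟨j', hj'⟩ | ⟨⟩ <;>
    simp_all [src, tgt, mid, edge, Subtype.ext_iff]

lemma src_ne_tgt_of_mid_eq {s s' : Detour y₀} (h : s.mid = s'.mid) : s.src ≠ s'.tgt := by
  rcases s with j | ⟨j, hj⟩ | ⟨⟩ <;> rcases s' with j' | ⟨j', hj'⟩ | ⟨⟩ <;>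
    simp_all [src, tgt, mid, edge, Subtype.ext_iff]

end Detour

def detourEdge (s : Detour y₀) : (⊤ : SimpleGraph (Fin 4 ⊕ Fin (t - 4))).edgeSet :=
  ⟨s(s.src, s.tgt), s.src_ne_tgt⟩

lemma detourEdge_injective : Function.Injective (detourEdge (y₀ := y₀)) := by
  rintro (j | ⟨j, hj⟩ | ⟨⟩) (j' | ⟨j', hj'⟩ | ⟨⟩) h <;>
    simp_all [detourEdge, Detour.src, Detour.tgt, Subtype.ext_iff]

lemma map_terminal_mem_edgeSet {e : (⊤ : SimpleGraph (Fin 4 ⊕ Fin (t - 4))).edgeSet}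
    (he : e ∉ Set.range (detourEdge (y₀ := y₀))) :
    Sym2.map (terminal y₀) e.1 ∈ ((triangleJoin t).toMG).lineGraph.edgeSet := by
  obtain ⟨e, hK⟩ := e
  induction e using Sym2.ind with
  | h x y =>
    exact ⟨terminal_injective.ne hK,
      exists_mem_terminal_of_ne_detour fun s hs => he ⟨s, Subtype.ext hs⟩⟩

variable (y₀) in
def directEdge (e : ↥(Set.range (detourEdge (y₀ := y₀)))ᶜ) :
    ((triangleJoin t).toMG).lineGraph.edgeSet :=
  ⟨Sym2.map (terminal y₀) e.1.1, map_terminal_mem_edgeSet e.2⟩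

def firstEdge (s : Detour y₀) : ((triangleJoin t).toMG).lineGraph.edgeSet :=
  ⟨s(terminal y₀ s.src, s.mid), s.lineGraph_adj_terminal_src_mid⟩

def secondEdge (s : Detour y₀) : ((triangleJoin t).toMG).lineGraph.edgeSet :=
  ⟨s(s.mid, terminal y₀ s.tgt), s.lineGraph_adj_mid_terminal_tgt⟩

lemma directEdge_injective : Function.Injective (directEdge y₀) := fun _ _ h =>
  Subtype.ext (Subtype.ext (Sym2.map.injective terminal_injective (congrArg Subtype.val h)))

lemma firstEdge_injective : Function.Injective (firstEdge (y₀ := y₀)) := fun _ _ h =>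
  have ⟨hx, hm⟩ := Detour.terminal_mid_eq_iff.mp (congrArg Subtype.val h)
  Detour.eq_of_mid_eq hm (.inl hx)

lemma secondEdge_injective : Function.Injective (secondEdge (y₀ := y₀)) := fun _ _ h =>
  have ⟨hx, hm⟩ := Detour.terminal_mid_eq_iff.mp
    (Sym2.eq_swap.trans ((congrArg Subtype.val h).trans Sym2.eq_swap))
  Detour.eq_of_mid_eq hm (.inr hx)

lemma directEdge_ne_firstEdge (e) (s : Detour y₀) : directEdge y₀ e ≠ firstEdge s := fun h => by
  have h : Sym2.map (terminal y₀) e.1.1 = s(terminal y₀ s.src, s.mid) := congrArg Subtype.val h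
  exact s.mid_notMem_map_terminal e.1.1 (h ▸ Sym2.mem_mk_right _ _)

lemma directEdge_ne_secondEdge (e) (s : Detour y₀) : directEdge y₀ e ≠ secondEdge s := fun h => by
  have h : Sym2.map (terminal y₀) e.1.1 = s(s.mid, terminal y₀ s.tgt) := congrArg Subtype.val h
  exact s.mid_notMem_map_terminal e.1.1 (h ▸ Sym2.mem_mk_left _ _)

lemma firstEdge_ne_secondEdge (s s' : Detour y₀) : firstEdge s ≠ secondEdge s' := fun h =>
  have ⟨hx, hm⟩ := Detour.terminal_mid_eq_iff.mp ((congrArg Subtype.val h).trans Sym2.eq_swap)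
  Detour.src_ne_tgt_of_mid_eq hm hx

variable (y₀) in
noncomputable def routing :
    MG.ShortRouting ((triangleJoin t).toMG).lineGraph.toMG
      (⊤ : SimpleGraph (Fin 4 ⊕ Fin (t - 4))).toMG
      ↥(Set.range (detourEdge (y₀ := y₀)))ᶜ (Detour y₀) where
  fv := ⟨terminal y₀, terminal_injective⟩
  π := (Equiv.sumComm _ _).trans <|
    ((Equiv.ofInjective _ detourEdge_injective).sumCongr (Equiv.refl _)).trans
      (Equiv.Set.sumCompl _)
  direct := directEdge y₀
  first := firstEdge
  second := secondEdge
  mid := Detour.mid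
  src := Detour.src
  tgt := Detour.tgt
  injective := (directEdge_injective.sumElim firstEdge_injective directEdge_ne_firstEdge).sumElim
    secondEdge_injective (Sum.rec directEdge_ne_secondEdge firstEdge_ne_secondEdge)
  ends_direct _ := rfl
  ends_detour _ := rfl
  ends_first _ := rfl
  ends_second _ := rfl

end triangleJoin

/-- for `t ≥ 5`, the line graph of the join of `K₃` with an
independent set of size `t - 4` has a `K_t`-immersion. -/
theorem triangleJoin_lineGraph_clique_immersion (t : ℕ) (ht : 5 ≤ t) :
    MG.Immersion (SimpleGraph.toMG ((triangleJoin t).toMG).lineGraph)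
      (completeMG t) :=
  (triangleJoin.routing ⟨0, by omega⟩).immersion.of_iso <| MG.iso_toMG <|
    .completeGraph <| finSumFinEquiv.trans <| finCongr (show 4 + (t - 4) = t by omega)
end
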